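/- arXiv:2604.18848 — 5 statements merged into one kernel-verified Lean document; each statement's English description precedes it below -/
import Mathlib

section
/- Let 0 < σ ≤ τ, let K := ⌈2τ/σ⌉ (the smallest integer with Kσ ≥ 2τ), and let β > 0. Then for every solution of the delayed Cucker–Smale system, the functional satisfies G(t) ≤ 𝒵^K_σ · Δ^0_v for all t ∈ [0, 2τ]. -/
open scoped BigOperators
open MeasureTheory

/-- Diameter of a configuration `w` at time `t` (used for positions and velocities). -/
noncomputable def csDiam {N d : ℕ} (w : Fin N → ℝ → EuclideanSpace ℝ (Fin d)) (t : ℝ) : ℝ :=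
  ⨆ i : Fin N, ⨆ j : Fin N, ‖w i t - w j t‖

/-- Maximum of the norms of `w' i t` over the agents `i`. -/
noncomputable def csMaxDer {N d : ℕ} (w' : Fin N → ℝ → EuclideanSpace ℝ (Fin d)) (t : ℝ) : ℝ :=
  ⨆ i : Fin N, ‖w' i t‖

/-- Lyapunov–Krasovskii functional
`G(t) = d_v(t) + β ∫_{max(0,t-2τ)}^t e^{-(t-s)} ∫_s^t max_i |v̇_i(r)| dr ds`. -/
noncomputable def csG {N d : ℕ} (β τ : ℝ)
    (v v' : Fin N → ℝ → EuclideanSpace ℝ (Fin d)) (t : ℝ) : ℝ :=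
  csDiam v t +
    β * ∫ s in (max 0 (t - 2 * τ))..t, Real.exp (-(t - s)) * ∫ r in s..t, csMaxDer v' r

/-- Minimal communication rate `a̲(t) = min_{i ≠ j} ψ(|x_i(t-σ) - x_j(t-τ)|)/(N-1)`. -/
noncomputable def csAMin {N d : ℕ} (ψ : ℝ → ℝ) (σ τ : ℝ)
    (x : Fin N → ℝ → EuclideanSpace ℝ (Fin d)) (t : ℝ) : ℝ :=
  ⨅ p : {p : Fin N × Fin N // p.1 ≠ p.2},
    ψ ‖x p.val.1 (t - σ) - x p.val.2 (t - τ)‖ / (N - 1)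


/-- `Δ^0_w = max_{i,j} max_{s,t ∈ [-τ,0]} |w_i(s) - w_j(t)|`. -/
noncomputable def csDelta0 {N d : ℕ} (τ : ℝ)
    (w : Fin N → ℝ → EuclideanSpace ℝ (Fin d)) : ℝ :=
  ⨆ i : Fin N, ⨆ j : Fin N, ⨆ s : Set.Icc (-τ) (0:ℝ), ⨆ t : Set.Icc (-τ) (0:ℝ),
    ‖w i s - w j t‖

/-- Closed-form sequence `Z^k_σ`. -/
noncomputable def csZ (σ : ℝ) (k : ℕ) : ℝ :=
  (((1 + σ) + Real.sqrt (σ * (1 + σ))) ^ (k + 1)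
    - ((1 + σ) - Real.sqrt (σ * (1 + σ))) ^ (k + 1)) / (2 * Real.sqrt (σ * (1 + σ)))

/-- `𝒵^K_σ = Z^K_σ + Z^{K-1}_σ · β (1 - (1+2τ) e^{-2τ})`. -/
noncomputable def csCalZ (σ τ β : ℝ) (K : ℕ) : ℝ :=
  csZ σ K + csZ σ (K - 1) * (β * (1 - (1 + 2 * τ) * Real.exp (-(2 * τ))))

/-!
Let `B_k` bound `|v_i(s) - v_j(t)|` over `s, t ∈ [-τ, kσ]`, so `B_0 = Δ^0_v`. For
`r ∈ (kσ, (k+1)σ]` both delayed arguments `r - τ ≤ r - σ` lie in `[-τ, kσ]` and the weights `a_ij`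
sum to at most `1`, so `|v̇_i(r)| ≤ B_k`; moving each of the two times by at most `σ` then gives
`B_{k+1} ≤ (1 + 2σ) B_k`. As `Kσ ≥ 2τ`, on `[0, 2τ]` we get `d_v ≤ (1 + 2σ)^K Δ^0_v` and
`|v̇_i| ≤ (1 + 2σ)^(K-1) Δ^0_v`, hence the integral term of `G` is at most
`β (1 + 2σ)^(K-1) Δ^0_v ∫_0^t e^{-(t-s)} (t - s) ds`, and this integral is `1 - (1 + t) e^{-t}`,
which increases with `t`.
Finally `(1 + 2σ)^k ≤ Z^k_σ`.
-/

open Set Real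

lemma norm_sub_le_of_hasDerivAt_Ioc {E : Type*} [NormedAddCommGroup E] [NormedSpace ℝ E]
    {f f' : ℝ → E} {a b C : ℝ} (hab : a ≤ b) (hf : ContinuousOn f (Icc a b))
    (hf' : ∀ x ∈ Ioc a b, HasDerivAt f (f' x) x) (bound : ∀ x ∈ Ioc a b, ‖f' x‖ ≤ C) :
    ‖f b - f a‖ ≤ C * (b - a) := by
  -- Reflecting `x ↦ -x` turns the derivative on `(a, b]` into a right derivative on `[-b, -a)`.
  have hrefl : ContinuousOn (fun y => f (-y)) (Icc (-b) (-a)) :=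
    hf.comp continuous_neg.continuousOn fun y hy => ⟨by linarith [hy.2], by linarith [hy.1]⟩
  have hderiv : ∀ y ∈ Ico (-b) (-a),
      HasDerivWithinAt (fun y => f (-y)) (-f' (-y)) (Ici y) y := fun y hy => by
    have := (hf' (-y) ⟨by linarith [hy.2], by linarith [hy.1]⟩).scomp y (hasDerivAt_neg y)
    simpa [Function.comp_def] using this.hasDerivWithinAt
  have := norm_image_sub_le_of_norm_deriv_right_le_segment hrefl hderiv
    (fun y hy => by simpa using bound (-y) ⟨by linarith [hy.2], by linarith [hy.1]⟩)
    (-a) ⟨neg_le_neg hab, le_rfl⟩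
  rw [norm_sub_rev, show C * (b - a) = C * (-a + b) by ring]
  simpa [sub_eq_add_neg] using this

lemma one_add_mul_exp_neg_le {a b : ℝ} (ha : 0 ≤ a) (hab : a ≤ b) :
    (1 + b) * exp (-b) ≤ (1 + a) * exp (-a) := by
  have h1 : (1 + b) ≤ (1 + a) * exp (b - a) := by
    nlinarith [add_one_le_exp (b - a), mul_nonneg ha (sub_nonneg.2 hab)]
  calc (1 + b) * exp (-b) ≤ (1 + a) * exp (b - a) * exp (-b) := by gcongr
    _ = (1 + a) * exp (-a) := by rw [mul_assoc, ← exp_add]; ring_nf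

lemma integral_exp_neg_sub_mul_sub (t : ℝ) :
    ∫ s in (0 : ℝ)..t, exp (-(t - s)) * (t - s) = 1 - (1 + t) * exp (-t) := by
  have hderiv : ∀ s ∈ uIcc 0 t, HasDerivAt (fun s => (t - s + 1) * exp (-(t - s)))
      (exp (-(t - s)) * (t - s)) s := fun s _ => by
    have hsub := (hasDerivAt_id s).const_sub t
    refine ((hsub.add_const 1).mul hsub.neg.exp).congr_deriv ?_
    simp only [id, Pi.neg_apply]
    ring
  have hcont : Continuous fun s => exp (-(t - s)) * (t - s) := by fun_prop
  rw [intervalIntegral.integral_eq_sub_of_hasDerivAt hderiv (hcont.intervalIntegrable _ _)]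
  simp only [sub_self, zero_add, neg_zero, exp_zero, mul_one, sub_zero]
  ring

lemma integral_exp_neg_sub_mul_integral_le {f : ℝ → ℝ} {t B : ℝ} (ht : 0 ≤ t)
    (hf_nonneg : ∀ r ∈ Ioc 0 t, 0 ≤ f r) (hf_le : ∀ r ∈ Ioc 0 t, f r ≤ B) :
    ∫ s in (0 : ℝ)..t, exp (-(t - s)) * ∫ r in s..t, f r ≤ B * (1 - (1 + t) * exp (-t)) := by
  have hinner : ∀ s ∈ Ioc 0 t, ∫ r in s..t, f r ≤ B * (t - s) := fun s hs => by
    have hnorm : ∀ r ∈ uIoc s t, ‖f r‖ ≤ B := fun r hr => by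
      rw [uIoc_of_le hs.2] at hr
      have hr' : r ∈ Ioc 0 t := ⟨hs.1.trans hr.1, hr.2⟩
      rw [Real.norm_of_nonneg (hf_nonneg r hr')]
      exact hf_le r hr'
    simpa [abs_of_nonneg (sub_nonneg.2 hs.2)] using
      (le_abs_self _).trans (intervalIntegral.norm_integral_le_of_norm_le_const hnorm)
  rw [← integral_exp_neg_sub_mul_sub, ← intervalIntegral.integral_const_mul,
    intervalIntegral.integral_of_le ht, intervalIntegral.integral_of_le ht]
  refine integral_mono_of_nonneg ?_ (Continuous.integrableOn_Ioc (by fun_prop)) ?_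
  · refine (ae_restrict_iff' measurableSet_Ioc).2 (ae_of_all _ fun s hs => ?_)
    exact mul_nonneg (exp_pos _).le (intervalIntegral.integral_nonneg hs.2
      fun r hr => hf_nonneg r ⟨hs.1.trans_le hr.1, hr.2⟩)
  · refine (ae_restrict_iff' measurableSet_Ioc).2 (ae_of_all _ fun s hs => ?_)
    calc exp (-(t - s)) * ∫ r in s..t, f r ≤ exp (-(t - s)) * (B * (t - s)) := by
          gcongr; exact hinner s hs
      _ = B * (exp (-(t - s)) * (t - s)) := by ring

lemma one_add_two_mul_pow_le_csZ {σ : ℝ} (hσ : 0 < σ) (k : ℕ) : (1 + 2 * σ) ^ k ≤ csZ σ k := by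
  set s := √(σ * (1 + σ))
  have hs_pos : 0 < s := Real.sqrt_pos.2 (by positivity)
  have hs_sq : s ^ 2 = σ * (1 + σ) := Real.sq_sqrt (by positivity)
  have hσs : σ ≤ s := by nlinarith
  have hs_le : s ≤ 1 + σ := by nlinarith
  -- `Z^k_σ` is the complete homogeneous sum `∑ aⁱ b^(k-i)` of the roots `a, b = 1 + σ ± s`.
  have hsum :
      csZ σ k = ∑ i ∈ Finset.range (k + 1), (1 + σ + s) ^ i * (1 + σ - s) ^ (k - i) := by
    rw [csZ, ← geom_sum₂_mul, show 1 + σ + s - (1 + σ - s) = 2 * s by ring,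
      mul_div_assoc, div_self (by positivity), mul_one]
    simp [s]
  rw [hsum]
  calc (1 + 2 * σ) ^ k ≤ (1 + σ + s) ^ k * (1 + σ - s) ^ (k - k) := by
        rw [Nat.sub_self, pow_zero, mul_one]
        exact pow_le_pow_left₀ (by positivity) (by linarith) k
    _ ≤ _ := Finset.single_le_sum (f := fun i => (1 + σ + s) ^ i * (1 + σ - s) ^ (k - i))
        (fun i _ => mul_nonneg (pow_nonneg (by linarith) _) (pow_nonneg (by linarith) _))
        (Finset.self_mem_range_succ k)

lemma le_iSup_iSup_of_forall_le {α β : Type*} {f : α → β → ℝ} {C : ℝ} (hC : ∀ a b, f a b ≤ C)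
    (a : α) (b : β) : f a b ≤ ⨆ a, ⨆ b, f a b := by
  have : Nonempty β := ⟨b⟩
  exact le_ciSup_of_le ⟨C, forall_mem_range.2 fun a => ciSup_le (hC a)⟩ a
    (le_ciSup ⟨C, forall_mem_range.2 (hC a)⟩ b)

lemma norm_sum_div_card_smul_le {ι E : Type*} [NormedAddCommGroup E] [NormedSpace ℝ E]
    (s : Finset ι) {c : ι → ℝ} {w : ι → E} {B : ℝ} (hB : 0 ≤ B)
    (hc : ∀ j ∈ s, c j ∈ Icc 0 1) (hw : ∀ j ∈ s, ‖w j‖ ≤ B) :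
    ‖∑ j ∈ s, (c j / s.card) • w j‖ ≤ B := by
  have hterm : ∀ j ∈ s, ‖(c j / s.card) • w j‖ ≤ B / s.card := fun j hj => by
    rw [norm_smul, Real.norm_of_nonneg (div_nonneg (hc j hj).1 s.card.cast_nonneg),
      div_mul_eq_mul_div]
    gcongr
    calc c j * ‖w j‖ ≤ 1 * B := mul_le_mul (hc j hj).2 (hw j hj) (norm_nonneg _) zero_le_one
      _ = B := one_mul B
  calc ‖∑ j ∈ s, (c j / s.card) • w j‖ ≤ ∑ j ∈ s, B / s.card :=
        (norm_sum_le _ _).trans (Finset.sum_le_sum hterm)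
    _ = s.card * (B / s.card) := by rw [Finset.sum_const, nsmul_eq_mul]
    _ ≤ B := by
        rcases eq_or_ne s.card 0 with h | h
        · simpa [h] using hB
        · rw [mul_div_cancel₀ _ (by exact_mod_cast h)]

section Spread

variable {ι E : Type*} [NormedAddCommGroup E]

def SpreadLE (v : ι → ℝ → E) (I : Set ℝ) (B : ℝ) : Prop :=
  ∀ i j, ∀ s ∈ I, ∀ t ∈ I, ‖v i s - v j t‖ ≤ B

lemma SpreadLE.nonneg {v : ι → ℝ → E} {I : Set ℝ} {B s : ℝ} (h : SpreadLE v I B) (i : ι)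
    (hs : s ∈ I) : 0 ≤ B :=
  (norm_nonneg _).trans (h i i s hs s hs)

/-- Each of the two times moves back into `[-τ, T]` by at most `σ`, at speed at most `B`. -/
lemma SpreadLE.extend [NormedSpace ℝ E] {v v' : ι → ℝ → E} {σ τ T B : ℝ} (hσ : 0 ≤ σ)
    (hT : -τ ≤ T) (hspread : SpreadLE v (Icc (-τ) T) B)
    (hv : ∀ i, ContinuousOn (v i) (Icc T (T + σ)))
    (hv' : ∀ i, ∀ r ∈ Ioc T (T + σ), HasDerivAt (v i) (v' i r) r)
    (hbound : ∀ i, ∀ r ∈ Ioc T (T + σ), ‖v' i r‖ ≤ B) :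
    SpreadLE v (Icc (-τ) (T + σ)) ((1 + 2 * σ) * B) := by
  intro i j s hs t ht
  have hB : 0 ≤ B := hspread.nonneg i ⟨hT, le_rfl⟩
  have hproj : ∀ k, ∀ s ∈ Icc (-τ) (T + σ),
      min s T ∈ Icc (-τ) T ∧ ‖v k s - v k (min s T)‖ ≤ σ * B := by
    intro k s hs
    refine ⟨⟨le_min hs.1 hT, min_le_right _ _⟩, ?_⟩
    rcases le_total s T with h | h
    · rw [min_eq_left h, sub_self, norm_zero]
      positivity
    · rw [min_eq_right h]
      calc ‖v k s - v k T‖ ≤ B * (s - T) :=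
            norm_sub_le_of_hasDerivAt_Ioc h ((hv k).mono (Icc_subset_Icc_right hs.2))
              (fun r hr => hv' k r ⟨hr.1, hr.2.trans hs.2⟩)
              (fun r hr => hbound k r ⟨hr.1, hr.2.trans hs.2⟩)
        _ ≤ σ * B := by nlinarith [hs.2]
  obtain ⟨hs₀, hs_near⟩ := hproj i s hs
  obtain ⟨ht₀, ht_near⟩ := hproj j t ht
  calc ‖v i s - v j t‖
      ≤ ‖v i s - v i (min s T)‖ + ‖v i (min s T) - v j (min t T)‖ + ‖v j (min t T) - v j t‖ :=
        (norm_sub_le_norm_sub_add_norm_sub _ (v j (min t T)) _).trans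
          (add_le_add_left (norm_sub_le_norm_sub_add_norm_sub _ _ _) _)
    _ ≤ σ * B + B + σ * B := by
        gcongr
        · exact hspread i j _ hs₀ _ ht₀
        · rwa [norm_sub_rev]
    _ = (1 + 2 * σ) * B := by ring

end Spread

lemma csDelta0_nonneg {N d : ℕ} (τ : ℝ) (v : Fin N → ℝ → EuclideanSpace ℝ (Fin d)) :
    0 ≤ csDelta0 τ v :=
  Real.iSup_nonneg fun _ => Real.iSup_nonneg fun _ => Real.iSup_nonneg fun _ =>
    Real.iSup_nonneg fun _ => norm_nonneg _

lemma spreadLE_csDelta0 {N d : ℕ} {τ : ℝ} {v : Fin N → ℝ → EuclideanSpace ℝ (Fin d)}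
    (hv : ∀ i, ContinuousOn (v i) (Icc (-τ) 0)) : SpreadLE v (Icc (-τ) 0) (csDelta0 τ v) := by
  intro i j s hs t ht
  obtain ⟨C, hC⟩ : ∃ C, ∀ i, ∀ r ∈ Icc (-τ) (0 : ℝ), ‖v i r‖ ≤ C := by
    choose C hC using fun i => isCompact_Icc.exists_bound_of_continuousOn (hv i)
    obtain ⟨M, hM⟩ := Finite.bddAbove_range C
    exact ⟨M, fun i r hr => (hC i r hr).trans (hM (mem_range_self i))⟩
  have hbound : ∀ i j (s t : Icc (-τ) (0 : ℝ)), ‖v i s - v j t‖ ≤ C + C := fun i j s t =>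
    (norm_sub_le _ _).trans (add_le_add (hC i s s.2) (hC j t t.2))
  have : Nonempty (Icc (-τ) (0 : ℝ)) := ⟨⟨s, hs⟩⟩
  calc ‖v i s - v j t‖ ≤ ⨆ s' : Icc (-τ) (0 : ℝ), ⨆ t' : Icc (-τ) (0 : ℝ), ‖v i s' - v j t'‖ :=
        le_iSup_iSup_of_forall_le (hbound i j) ⟨s, hs⟩ ⟨t, ht⟩
    _ ≤ csDelta0 τ v :=
        le_iSup_iSup_of_forall_le (fun i j => ciSup_le fun s => ciSup_le (hbound i j s)) i j

def IsDelayedCuckerSmale {E : Type*} [NormedAddCommGroup E] [NormedSpace ℝ E] {N : ℕ}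
    (ψ : ℝ → ℝ) (σ τ : ℝ) (x v v' : Fin N → ℝ → E) : Prop :=
  ∀ i, ∀ t > (0:ℝ), v' i t = ∑ j ∈ Finset.univ.erase i,
    (ψ ‖x i (t - σ) - x j (t - τ)‖ / (N - 1)) • (v j (t - τ) - v i (t - σ))

lemma IsDelayedCuckerSmale.norm_deriv_le {E : Type*} [NormedAddCommGroup E] [NormedSpace ℝ E]
    {N : ℕ} {ψ : ℝ → ℝ} {σ τ : ℝ} {x v v' : Fin N → ℝ → E}
    (hode : IsDelayedCuckerSmale ψ σ τ x v v') (hψ : ∀ s, 0 ≤ s → ψ s ∈ Icc 0 1) (hστ : σ ≤ τ)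
    {T B : ℝ} (hspread : SpreadLE v (Icc (-τ) T) B) {i : Fin N} {r : ℝ} (hr : 0 < r)
    (hrT : r - σ ≤ T) : ‖v' i r‖ ≤ B := by
  have hτ : r - τ ∈ Icc (-τ) T := ⟨by linarith, by linarith⟩
  have hσ : r - σ ∈ Icc (-τ) T := ⟨by linarith, hrT⟩
  have hcard : (((Finset.univ.erase i).card : ℕ) : ℝ) = N - 1 := by
    rw [Finset.card_erase_of_mem (Finset.mem_univ i), Finset.card_univ, Fintype.card_fin,
      Nat.cast_pred i.pos]
  rw [hode i r hr, ← hcard]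
  exact norm_sum_div_card_smul_le _ (hspread.nonneg i hτ) (fun j _ => hψ _ (norm_nonneg _))
    (fun j _ => hspread j i _ hτ _ hσ)

lemma spreadLE_one_add_two_mul_pow {N d : ℕ} {ψ : ℝ → ℝ} {σ τ : ℝ}
    {x v v' : Fin N → ℝ → EuclideanSpace ℝ (Fin d)} (hσ : 0 < σ) (hστ : σ ≤ τ)
    (hψ : ∀ s, 0 ≤ s → ψ s ∈ Icc 0 1) (hvc : ∀ i, ContinuousOn (v i) (Ici (-τ)))
    (hvder : ∀ i, ∀ t > (0:ℝ), HasDerivAt (v i) (v' i t) t)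
    (hode : IsDelayedCuckerSmale ψ σ τ x v v') (k : ℕ) :
    SpreadLE v (Icc (-τ) (k * σ)) ((1 + 2 * σ) ^ k * csDelta0 τ v) := by
  induction k with
  | zero => simpa using spreadLE_csDelta0 fun i => (hvc i).mono Icc_subset_Ici_self
  | succ k ih =>
    have hT : 0 ≤ k * σ := by positivity
    rw [Nat.cast_succ, add_one_mul, pow_succ', mul_assoc]
    refine ih.extend hσ.le (by linarith)
      (fun i => (hvc i).mono fun r hr => mem_Ici.2 (by linarith [hr.1]))
      (fun i r hr => hvder i r (hT.trans_lt hr.1))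
      (fun i r hr => hode.norm_deriv_le hψ hστ ih (hT.trans_lt hr.1) (by linarith [hr.2]))

lemma csG_le {N d : ℕ} {β τ t A B : ℝ} {v v' : Fin N → ℝ → EuclideanSpace ℝ (Fin d)}
    (hβ : 0 ≤ β) (ht : t ∈ Icc 0 (2 * τ)) (hA : 0 ≤ A) (hdiam : ∀ i j, ‖v i t - v j t‖ ≤ A)
    (hB : 0 ≤ B) (hv' : ∀ i, ∀ r ∈ Ioc 0 t, ‖v' i r‖ ≤ B) :
    csG β τ v v' t ≤ A + β * (B * (1 - (1 + 2 * τ) * exp (-(2 * τ)))) := by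
  rw [csG, max_eq_left (by linarith [ht.2])]
  have hmaxder : ∀ r ∈ Ioc 0 t, csMaxDer v' r ≤ B := fun r hr => Real.iSup_le (hv' · r hr) hB
  gcongr
  · exact Real.iSup_le (fun i => Real.iSup_le (hdiam i) hA) hA
  · refine (integral_exp_neg_sub_mul_integral_le ht.1
      (fun r _ => Real.iSup_nonneg fun _ => norm_nonneg _) hmaxder).trans ?_
    exact mul_le_mul_of_nonneg_left (by linarith [one_add_mul_exp_neg_le ht.1 ht.2]) hB

theorem stmt_13_general
    (N d : ℕ)
    (σ τ : ℝ) (hσ : 0 < σ) (hστ : σ ≤ τ)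
    (K : ℕ) (hK : K = ⌈2 * τ / σ⌉₊)
    (β : ℝ) (hβ : 0 < β)
    (ψ : ℝ → ℝ)
    (hψpos : ∀ s, 0 ≤ s → 0 < ψ s)
    (hψbdd : ∀ s, 0 ≤ s → ψ s ≤ 1)
    (x v v' : Fin N → ℝ → EuclideanSpace ℝ (Fin d))
    (hvc : ∀ i, ContinuousOn (v i) (Set.Ici (-τ)))
    (hvder : ∀ i, ∀ t > (0:ℝ), HasDerivAt (v i) (v' i t) t)
    (hode : ∀ i, ∀ t > (0:ℝ),
      v' i t = ∑ j ∈ Finset.univ.erase i,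
        (ψ ‖x i (t - σ) - x j (t - τ)‖ / (N - 1)) • (v j (t - τ) - v i (t - σ))) :
    ∀ t ∈ Set.Icc (0:ℝ) (2 * τ),
      csG β τ v v' t ≤ csCalZ σ τ β K * csDelta0 τ v := by
  intro t ht
  have hτ : 0 < τ := hσ.trans_le hστ
  have hKσ : 2 * τ ≤ K * σ := hK ▸ (div_le_iff₀ hσ).1 (Nat.le_ceil _)
  have hK1 : 1 ≤ K := hK ▸ Nat.ceil_pos.2 (by positivity)
  have hψ : ∀ s, 0 ≤ s → ψ s ∈ Icc 0 1 := fun s hs => ⟨(hψpos s hs).le, hψbdd s hs⟩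
  have hspread := spreadLE_one_add_two_mul_pow hσ hστ hψ hvc hvder hode
  set Δ := csDelta0 τ v
  have hΔ : 0 ≤ Δ := csDelta0_nonneg τ v
  have hc : 0 ≤ 1 - (1 + 2 * τ) * exp (-(2 * τ)) := by
    simpa using one_add_mul_exp_neg_le le_rfl (by positivity : (0 : ℝ) ≤ 2 * τ)
  have htK : t ∈ Icc (-τ) (K * σ) := ⟨by linarith [ht.1], ht.2.trans hKσ⟩
  calc csG β τ v v' t
      ≤ (1 + 2 * σ) ^ K * Δ + β * ((1 + 2 * σ) ^ (K - 1) * Δ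
          * (1 - (1 + 2 * τ) * exp (-(2 * τ)))) :=
        csG_le hβ.le ht (by positivity) (fun i j => hspread K i j t htK t htK) (by positivity)
          fun i r hr => IsDelayedCuckerSmale.norm_deriv_le hode hψ hστ (hspread (K - 1)) hr.1
            (by push_cast [Nat.cast_sub hK1]; linarith [hr.2, ht.2])
    _ ≤ csZ σ K * Δ + β * (csZ σ (K - 1) * Δ * (1 - (1 + 2 * τ) * exp (-(2 * τ)))) := by
        gcongr <;> exact one_add_two_mul_pow_le_csZ hσ _
    _ = csCalZ σ τ β K * Δ := by rw [csCalZ]; ring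

theorem stmt_13
    (N d : ℕ) (hN : 2 ≤ N) (hd : 1 ≤ d)
    (σ τ : ℝ) (hσ : 0 < σ) (hστ : σ ≤ τ)
    (K : ℕ) (hK : K = ⌈2 * τ / σ⌉₊)
    (β : ℝ) (hβ : 0 < β)
    (ψ : ℝ → ℝ)
    (hψpos : ∀ s, 0 ≤ s → 0 < ψ s)
    (hψcont : ContinuousOn ψ (Set.Ici 0))
    (hψmono : ∀ s t, 0 ≤ s → s ≤ t → ψ t ≤ ψ s)
    (hψbdd : ∀ s, 0 ≤ s → ψ s ≤ 1)
    (x v v' : Fin N → ℝ → EuclideanSpace ℝ (Fin d))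
    (hxc : ∀ i, ContinuousOn (x i) (Set.Ici (-τ)))
    (hvc : ∀ i, ContinuousOn (v i) (Set.Ici (-τ)))
    (hxder : ∀ i, ∀ t, -τ < t → HasDerivAt (x i) (v i t) t)
    (hvder : ∀ i, ∀ t > (0:ℝ), HasDerivAt (v i) (v' i t) t)
    (hode : ∀ i, ∀ t > (0:ℝ),
      v' i t = ∑ j ∈ Finset.univ.erase i,
        (ψ ‖x i (t - σ) - x j (t - τ)‖ / (N - 1)) • (v j (t - τ) - v i (t - σ))) :
    ∀ t ∈ Set.Icc (0:ℝ) (2 * τ),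
      csG β τ v v' t ≤ csCalZ σ τ β K * csDelta0 τ v :=
  stmt_13_general N d σ τ hσ hστ K hK β hβ ψ hψpos hψbdd x v v' hvc hvder hode
end

section
/- Let β > 0. For every solution of the delayed Cucker–Smale system, all indices i, j and all t ≥ 2τ, one has |v_j(t−τ) − v_i(t−σ)| ≤ d_v(t−τ) + ∫_{t−τ}^{t−σ} d_v(s−τ) ds + β^{−1} e^{2τ} G(t−σ). -/
/-!
The velocity `v j (t - τ)` differs from `v i (t - σ)` by at most the spread `d_v(t - τ)` plus the
drift of agent `i` over `[t - τ, t - σ]`. Since `ψ ≤ 1`, the acceleration of agent `i` is an average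
of at most `N - 1` delayed relative velocities with weights `≤ 1/(N - 1)`; so its speed at time `s`
is bounded by `d_v(s - τ)` plus the drift over `[s - τ, t - σ]`, that is, by
`∫_{s-τ}^{t-σ} max_k |v̇_k|`. Integrating in `s`, the shifted double integral lives on the window
`[t - σ - 2τ, t - σ]`, where `e^{-(t-σ-u)} ≥ e^{-2τ}`; it is therefore at most `e^{2τ}` times the
integral term of `G(t - σ)`, i.e. at most `β⁻¹ e^{2τ} G(t - σ)`.
-/

open scoped BigOperators
open MeasureTheory

open Set Finset Real

theorem ContinuousOn.ciSup_fintype {α ι L : Type*} [TopologicalSpace α] [Fintype ι]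
    [ConditionallyCompleteLattice L] [TopologicalSpace L] [ContinuousSup L]
    {f : ι → α → L} {s : Set α} (hf : ∀ i, ContinuousOn (f i) s) :
    ContinuousOn (fun a => ⨆ i, f i a) s := by
  cases isEmpty_or_nonempty ι
  · simpa only [iSup_of_empty'] using continuousOn_const
  · simpa only [← Finset.sup'_univ_eq_ciSup] using
      ContinuousOn.finset_sup'_apply univ_nonempty fun i _ => hf i

theorem norm_sum_erase_smul_le {E : Type*} [SeminormedAddCommGroup E] [NormedSpace ℝ E]
    {N : ℕ} (i : Fin N) {c : Fin N → ℝ} {u : Fin N → E} {B : ℝ}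
    (hc0 : ∀ l, 0 ≤ c l) (hc1 : ∀ l, c l ≤ ((N : ℝ) - 1)⁻¹) (hu : ∀ l, ‖u l‖ ≤ B) :
    ‖∑ l ∈ univ.erase i, c l • u l‖ ≤ B := by
  have hB : 0 ≤ B := (norm_nonneg _).trans (hu i)
  have hcard : ((univ.erase i).card : ℝ) = (N : ℝ) - 1 := by
    rw [card_erase_of_mem (mem_univ i), card_univ, Fintype.card_fin, Nat.cast_sub i.pos,
      Nat.cast_one]
  calc ‖∑ l ∈ univ.erase i, c l • u l‖
      ≤ ∑ l ∈ univ.erase i, ((N : ℝ) - 1)⁻¹ * B := by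
        refine norm_sum_le_of_le _ fun l _ => ?_
        rw [norm_smul, Real.norm_of_nonneg (hc0 l)]
        exact mul_le_mul (hc1 l) (hu l) (norm_nonneg _) ((hc0 l).trans (hc1 l))
    _ = ((N : ℝ) - 1) * ((N : ℝ) - 1)⁻¹ * B := by
        rw [sum_const, nsmul_eq_mul, hcard, mul_assoc]
    _ ≤ B := mul_le_of_le_one_left hB mul_inv_le_one

theorem IntervalIntegrable.of_eqOn_Ioc {E : Type*} [NormedAddCommGroup E] {f g : ℝ → E}
    {a b : ℝ} (hab : a ≤ b) (hg : ContinuousOn g (Icc a b)) (hfg : EqOn f g (Ioc a b)) :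
    IntervalIntegrable f volume a b :=
  (hg.intervalIntegrable_of_Icc hab).congr (by rw [uIoc_of_le hab]; exact hfg.symm)

theorem norm_sub_le_integral_of_hasDerivAt {E : Type*} [NormedAddCommGroup E]
    [NormedSpace ℝ E] [CompleteSpace E] {f f' F : ℝ → E} {g : ℝ → ℝ} {a b : ℝ} (hab : a ≤ b)
    (hf : ContinuousOn f (Icc a b)) (hderiv : ∀ r ∈ Ioo a b, HasDerivAt f (f' r) r)
    (hF : ContinuousOn F (Icc a b)) (hf'F : EqOn f' F (Ioc a b))
    (hg : IntervalIntegrable g volume a b) (hle : ∀ r ∈ Ioc a b, ‖f' r‖ ≤ g r) :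
    ‖f b - f a‖ ≤ ∫ r in a..b, g r := by
  rw [← intervalIntegral.integral_eq_sub_of_hasDerivAt_of_le hab hf hderiv
    (IntervalIntegrable.of_eqOn_Ioc hab hF hf'F)]
  exact intervalIntegral.norm_integral_le_of_norm_le hab (ae_of_all _ hle) hg

theorem norm_sub_le_integral_of_hasDerivAt_Ioi {E : Type*} [NormedAddCommGroup E]
    [NormedSpace ℝ E] [CompleteSpace E] {f f' F : ℝ → E} {g : ℝ → ℝ} {a b : ℝ}
    (hf : ContinuousOn f (Ici 0)) (hderiv : ∀ r > (0 : ℝ), HasDerivAt f (f' r) r)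
    (hF : ContinuousOn F (Ici 0)) (hf'F : EqOn f' F (Ioi 0)) (ha : 0 ≤ a) (hab : a ≤ b)
    (hg : IntervalIntegrable g volume a b) (hle : ∀ r ∈ Ioc a b, ‖f' r‖ ≤ g r) :
    ‖f b - f a‖ ≤ ∫ r in a..b, g r :=
  have hsub : Icc a b ⊆ Ici 0 := fun _ hr => ha.trans hr.1
  norm_sub_le_integral_of_hasDerivAt hab (hf.mono hsub) (fun r hr => hderiv r (ha.trans_lt hr.1))
    (hF.mono hsub) (fun _ hr => hf'F (ha.trans_lt hr.1)) hg hle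

/-- On `[b - 2τ, b]` the weight `e^{-(b-u)}` is at least `e^{-2τ}`, and the shifted window
`[a - τ, b - τ]` lies in `[max 0 (b - 2τ), b]`. -/
theorem integral_comp_sub_le_exp_mul_integral {H : ℝ → ℝ} {a b τ : ℝ} (hτa : τ ≤ a)
    (hab : a ≤ b) (hba : b - a ≤ τ) (hH : ContinuousOn H (Icc 0 b))
    (hH0 : ∀ u ∈ Icc 0 b, 0 ≤ H u) :
    ∫ s in a..b, H (s - τ) ≤ exp (2 * τ) * ∫ u in (max 0 (b - 2 * τ))..b, exp (-(b - u)) * H u := by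
  set K : ℝ → ℝ := fun u => exp (-(b - u)) * H u
  have hK : ContinuousOn K (Icc 0 b) := by fun_prop
  have hwindow : Icc (a - τ) (b - τ) ⊆ Icc 0 b := Icc_subset_Icc (by linarith) (by linarith)
  rw [intervalIntegral.integral_comp_sub_right, ← intervalIntegral.integral_const_mul]
  calc ∫ u in (a - τ)..(b - τ), H u ≤ ∫ u in (a - τ)..(b - τ), exp (2 * τ) * K u := by
        refine intervalIntegral.integral_mono_on (by linarith)
          ((hH.mono hwindow).intervalIntegrable_of_Icc (by linarith))
          (((hK.mono hwindow).intervalIntegrable_of_Icc (by linarith)).const_mul _) fun u hu => ?_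
        have hexp : 1 ≤ exp (2 * τ) * exp (-(b - u)) := by
          rw [← exp_add]; exact one_le_exp (by linarith [hu.1])
        simpa only [K, ← mul_assoc] using le_mul_of_one_le_left (hH0 u (hwindow hu)) hexp
    _ ≤ ∫ u in (max 0 (b - 2 * τ))..b, exp (2 * τ) * K u := by
        refine intervalIntegral.integral_mono_interval (max_le (by linarith) (by linarith))
          (by linarith) (by linarith) (ae_restrict_of_forall_mem measurableSet_Ioc fun u hu => ?_)
          ((hK.mono (Icc_subset_Icc (le_max_left _ _) le_rfl)).intervalIntegrable_of_Icc
            (max_le (by linarith) (by linarith)) |>.const_mul _)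
        have hu0 : 0 ≤ u := (le_max_left _ _).trans hu.1.le
        exact mul_nonneg (exp_pos _).le (mul_nonneg (exp_pos _).le (hH0 u ⟨hu0, hu.2⟩))

section Configuration

variable {N d : ℕ}

theorem norm_sub_le_csDiam (w : Fin N → ℝ → EuclideanSpace ℝ (Fin d)) (i j : Fin N) (t : ℝ) :
    ‖w i t - w j t‖ ≤ csDiam w t :=
  le_ciSup_of_le (Finite.bddAbove_range _) i
    (le_ciSup (f := fun j => ‖w i t - w j t‖) (Finite.bddAbove_range _) j)

theorem csDiam_nonneg (w : Fin N → ℝ → EuclideanSpace ℝ (Fin d)) (t : ℝ) : 0 ≤ csDiam w t :=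
  Real.iSup_nonneg fun _ => Real.iSup_nonneg fun _ => norm_nonneg _

theorem continuousOn_csDiam {w : Fin N → ℝ → EuclideanSpace ℝ (Fin d)} {s : Set ℝ}
    (hw : ∀ i, ContinuousOn (w i) s) : ContinuousOn (csDiam w) s :=
  ContinuousOn.ciSup_fintype fun i =>
    ContinuousOn.ciSup_fintype fun j => ((hw i).sub (hw j)).norm

theorem norm_le_csMaxDer (w' : Fin N → ℝ → EuclideanSpace ℝ (Fin d)) (i : Fin N) (t : ℝ) :
    ‖w' i t‖ ≤ csMaxDer w' t :=
  le_ciSup (f := fun i => ‖w' i t‖) (Finite.bddAbove_range _) i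

theorem csMaxDer_nonneg (w' : Fin N → ℝ → EuclideanSpace ℝ (Fin d)) (t : ℝ) :
    0 ≤ csMaxDer w' t :=
  Real.iSup_nonneg fun _ => norm_nonneg _

theorem integral_le_inv_mul_csG {β : ℝ} (hβ : 0 < β) (τ : ℝ)
    (v v' : Fin N → ℝ → EuclideanSpace ℝ (Fin d)) (t : ℝ) :
    ∫ s in (max 0 (t - 2 * τ))..t, exp (-(t - s)) * ∫ r in s..t, csMaxDer v' r
      ≤ β⁻¹ * csG β τ v v' t := by
  rw [le_inv_mul_iff₀ hβ, csG]
  linarith [csDiam_nonneg v t]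

end Configuration

section Alignment

variable {N d : ℕ}

noncomputable def csAlignment (ψ : ℝ → ℝ) (σ τ : ℝ) (x v : Fin N → ℝ → EuclideanSpace ℝ (Fin d))
    (i : Fin N) (t : ℝ) : EuclideanSpace ℝ (Fin d) :=
  ∑ j ∈ univ.erase i, (ψ ‖x i (t - σ) - x j (t - τ)‖ / (N - 1)) • (v j (t - τ) - v i (t - σ))

theorem continuousOn_csAlignment {ψ : ℝ → ℝ} {σ τ : ℝ} (hστ : σ ≤ τ)
    (hψ : ContinuousOn ψ (Ici 0)) {x v : Fin N → ℝ → EuclideanSpace ℝ (Fin d)}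
    (hx : ∀ i, ContinuousOn (x i) (Ici (-τ))) (hv : ∀ i, ContinuousOn (v i) (Ici (-τ)))
    (i : Fin N) : ContinuousOn (csAlignment ψ σ τ x v i) (Ici 0) := by
  have hshift : ∀ {c}, c ≤ τ → MapsTo (fun s : ℝ => s - c) (Ici 0) (Ici (-τ)) :=
    fun hc s hs => by simp only [Set.mem_Ici] at hs ⊢; linarith
  have hσ' := hshift hστ
  have hτ' := hshift le_rfl
  refine continuousOn_finsetSum _ fun j _ => ?_
  have hdist : ContinuousOn (fun s => ‖x i (s - σ) - x j (s - τ)‖) (Ici 0) :=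
    (((hx i).comp (by fun_prop) hσ').sub ((hx j).comp (by fun_prop) hτ')).norm
  have hrel : ContinuousOn (fun s => v j (s - τ) - v i (s - σ)) (Ici 0) :=
    ((hv j).comp (by fun_prop) hτ').sub ((hv i).comp (by fun_prop) hσ')
  exact ((hψ.comp hdist fun _ _ => norm_nonneg _).div_const _).smul hrel

theorem norm_csAlignment_le {ψ : ℝ → ℝ} (hψ0 : ∀ s, 0 ≤ s → 0 ≤ ψ s) (hψ1 : ∀ s, 0 ≤ s → ψ s ≤ 1)
    (σ τ : ℝ) (x v : Fin N → ℝ → EuclideanSpace ℝ (Fin d)) (i : Fin N) (t : ℝ) :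
    ‖csAlignment ψ σ τ x v i t‖ ≤ csDiam v (t - τ) + ‖v i (t - τ) - v i (t - σ)‖ := by
  have hN : (0 : ℝ) ≤ N - 1 := by
    have : (1 : ℝ) ≤ N := by exact_mod_cast i.pos
    linarith
  refine norm_sum_erase_smul_le i (fun j => div_nonneg (hψ0 _ (norm_nonneg _)) hN)
    (fun j => ?_) fun j => ?_
  · rw [div_eq_mul_inv]
    exact mul_le_of_le_one_left (inv_nonneg.2 hN) (hψ1 _ (norm_nonneg _))
  · exact (norm_sub_le_norm_sub_add_norm_sub _ (v i (t - τ)) _).trans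
      (add_le_add_left (norm_sub_le_csDiam v j i _) _)

end Alignment

section Solution

/- `F` is continuous on `[0, ∞)` and agrees with `v'` on `(0, ∞)`: this makes the speeds integrable
down to time `0`, where nothing is known about `v'`. -/
variable {N d : ℕ} {v v' F : Fin N → ℝ → EuclideanSpace ℝ (Fin d)}

theorem intervalIntegrable_csMaxDer (hF : ∀ k, ContinuousOn (F k) (Ici 0))
    (hv'F : ∀ k, EqOn (v' k) (F k) (Ioi 0)) {a b : ℝ} (ha : 0 ≤ a) (hab : a ≤ b) :
    IntervalIntegrable (csMaxDer v') volume a b :=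
  IntervalIntegrable.of_eqOn_Ioc hab
    (ContinuousOn.ciSup_fintype fun k => ((hF k).mono fun _ hr => ha.trans hr.1).norm)
    fun _ hr => by simp only [csMaxDer, hv'F _ (ha.trans_lt hr.1)]

theorem continuousOn_integral_csMaxDer (hF : ∀ k, ContinuousOn (F k) (Ici 0))
    (hv'F : ∀ k, EqOn (v' k) (F k) (Ioi 0)) {b : ℝ} (hb : 0 ≤ b) :
    ContinuousOn (fun u => ∫ r in u..b, csMaxDer v' r) (Icc 0 b) := by
  rw [← uIcc_of_le hb]
  refine intervalIntegral.continuousOn_primitive_interval_left ?_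
  rw [uIcc_of_le hb]
  exact (intervalIntegrable_iff_integrableOn_Icc_of_le hb).1
    (intervalIntegrable_csMaxDer hF hv'F le_rfl hb)

theorem norm_deriv_le_csDiam_add_integral {σ τ : ℝ} (hστ : σ ≤ τ)
    (hv : ∀ k, ContinuousOn (v k) (Ici 0))
    (hderiv : ∀ k, ∀ r > (0 : ℝ), HasDerivAt (v k) (v' k r) r)
    (hF : ∀ k, ContinuousOn (F k) (Ici 0)) (hv'F : ∀ k, EqOn (v' k) (F k) (Ioi 0)) {i : Fin N}
    (hbound : ∀ s > (0 : ℝ), ‖v' i s‖ ≤ csDiam v (s - τ) + ‖v i (s - τ) - v i (s - σ)‖)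
    {s b : ℝ} (hs : 0 < s) (hτs : τ ≤ s) (hsb : s - σ ≤ b) :
    ‖v' i s‖ ≤ csDiam v (s - τ) + ∫ r in (s - τ)..b, csMaxDer v' r := by
  have hs0 : 0 ≤ s - τ := by linarith
  refine (hbound s hs).trans (add_le_add_right ?_ _)
  rw [norm_sub_rev]
  calc ‖v i (s - σ) - v i (s - τ)‖ ≤ ∫ r in (s - τ)..(s - σ), csMaxDer v' r :=
        norm_sub_le_integral_of_hasDerivAt_Ioi (hv i) (hderiv i) (hF i) (hv'F i) hs0
          (by linarith) (intervalIntegrable_csMaxDer hF hv'F hs0 (by linarith))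
          fun r _ => norm_le_csMaxDer v' i r
    _ ≤ ∫ r in (s - τ)..b, csMaxDer v' r :=
        intervalIntegral.integral_mono_interval le_rfl (by linarith) hsb
          (ae_of_all _ fun r => csMaxDer_nonneg v' r)
          (intervalIntegrable_csMaxDer hF hv'F hs0 (by linarith))

theorem integral_integral_csMaxDer_le_csG {β : ℝ} (hβ : 0 < β)
    (hF : ∀ k, ContinuousOn (F k) (Ici 0)) (hv'F : ∀ k, EqOn (v' k) (F k) (Ioi 0))
    (v : Fin N → ℝ → EuclideanSpace ℝ (Fin d)) {a b τ : ℝ} (hτa : τ ≤ a) (hab : a ≤ b)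
    (hba : b - a ≤ τ) :
    ∫ s in a..b, ∫ r in (s - τ)..b, csMaxDer v' r ≤ β⁻¹ * exp (2 * τ) * csG β τ v v' b :=
  calc ∫ s in a..b, ∫ r in (s - τ)..b, csMaxDer v' r
      ≤ exp (2 * τ) * ∫ u in (max 0 (b - 2 * τ))..b, exp (-(b - u)) * ∫ r in u..b, csMaxDer v' r :=
        integral_comp_sub_le_exp_mul_integral hτa hab hba
          (continuousOn_integral_csMaxDer hF hv'F (by linarith))
          fun u hu => intervalIntegral.integral_nonneg hu.2 fun r _ => csMaxDer_nonneg v' r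
    _ ≤ exp (2 * τ) * (β⁻¹ * csG β τ v v' b) := by
        gcongr; exact integral_le_inv_mul_csG hβ τ v v' b
    _ = β⁻¹ * exp (2 * τ) * csG β τ v v' b := by ring

theorem norm_delay_sub_le {σ τ β : ℝ} (hσ : 0 ≤ σ) (hστ : σ ≤ τ) (hβ : 0 < β)
    (hv : ∀ k, ContinuousOn (v k) (Ici 0))
    (hderiv : ∀ k, ∀ r > (0 : ℝ), HasDerivAt (v k) (v' k r) r)
    (hF : ∀ k, ContinuousOn (F k) (Ici 0)) (hv'F : ∀ k, EqOn (v' k) (F k) (Ioi 0)) (i j : Fin N)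
    (hbound : ∀ s > (0 : ℝ), ‖v' i s‖ ≤ csDiam v (s - τ) + ‖v i (s - τ) - v i (s - σ)‖)
    {t : ℝ} (ht : 2 * τ ≤ t) :
    ‖v j (t - τ) - v i (t - σ)‖ ≤ csDiam v (t - τ)
      + (∫ s in (t - τ)..(t - σ), csDiam v (s - τ))
      + β⁻¹ * exp (2 * τ) * csG β τ v v' (t - σ) := by
  set b := t - σ
  have hab : t - τ ≤ b := by linarith
  have hshift : MapsTo (fun s => s - τ) (Icc (t - τ) b) (Icc 0 b) :=
    fun s hs => ⟨by linarith [hs.1], by linarith [hs.2]⟩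
  have hD : IntervalIntegrable (fun s => csDiam v (s - τ)) volume (t - τ) b :=
    ((continuousOn_csDiam hv).comp (by fun_prop)
      fun _ hs => (hshift hs).1).intervalIntegrable_of_Icc hab
  have hH : IntervalIntegrable (fun s => ∫ r in (s - τ)..b, csMaxDer v' r) volume (t - τ) b :=
    ((continuousOn_integral_csMaxDer hF hv'F (by linarith)).comp (by fun_prop)
      hshift).intervalIntegrable_of_Icc hab
  have hspeed : ∀ s ∈ Ioc (t - τ) b,
      ‖v' i s‖ ≤ csDiam v (s - τ) + ∫ r in (s - τ)..b, csMaxDer v' r := fun s hs =>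
    norm_deriv_le_csDiam_add_integral hστ hv hderiv hF hv'F hbound (by linarith [hs.1])
      (by linarith [hs.1]) (by linarith [hs.2])
  calc ‖v j (t - τ) - v i b‖ ≤ csDiam v (t - τ) + ‖v i b - v i (t - τ)‖ := by
        rw [norm_sub_rev (v i b)]
        exact (norm_sub_le_norm_sub_add_norm_sub _ (v i (t - τ)) _).trans
          (add_le_add_left (norm_sub_le_csDiam v j i _) _)
    _ ≤ csDiam v (t - τ) + ((∫ s in (t - τ)..b, csDiam v (s - τ))
          + ∫ s in (t - τ)..b, ∫ r in (s - τ)..b, csMaxDer v' r) := by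
        rw [← intervalIntegral.integral_add hD hH]
        exact add_le_add_right (norm_sub_le_integral_of_hasDerivAt_Ioi (hv i) (hderiv i) (hF i)
          (hv'F i) (by linarith) hab (hD.add hH) hspeed) _
    _ ≤ _ := by
        linarith [integral_integral_csMaxDer_le_csG hβ hF hv'F v (by linarith) hab
          (by linarith : b - (t - τ) ≤ τ)]

end Solution

theorem stmt_14_general
    (N d : ℕ)
    (σ τ : ℝ) (hσ : 0 ≤ σ) (hστ : σ ≤ τ)
    (β : ℝ) (hβ : 0 < β)
    (ψ : ℝ → ℝ)
    (hψpos : ∀ s, 0 ≤ s → 0 < ψ s)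
    (hψcont : ContinuousOn ψ (Set.Ici 0))
    (hψbdd : ∀ s, 0 ≤ s → ψ s ≤ 1)
    (x v v' : Fin N → ℝ → EuclideanSpace ℝ (Fin d))
    (hxc : ∀ i, ContinuousOn (x i) (Set.Ici (-τ)))
    (hvc : ∀ i, ContinuousOn (v i) (Set.Ici (-τ)))
    (hvder : ∀ i, ∀ t > (0:ℝ), HasDerivAt (v i) (v' i t) t)
    (hode : ∀ i, ∀ t > (0:ℝ),
      v' i t = ∑ j ∈ Finset.univ.erase i,
        (ψ ‖x i (t - σ) - x j (t - τ)‖ / (N - 1)) • (v j (t - τ) - v i (t - σ))) :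
    ∀ (i j : Fin N), ∀ t, 2 * τ ≤ t →
      ‖v j (t - τ) - v i (t - σ)‖ ≤ csDiam v (t - τ)
        + (∫ s in (t - τ)..(t - σ), csDiam v (s - τ))
        + β⁻¹ * Real.exp (2 * τ) * csG β τ v v' (t - σ) := by
  intro i j t ht
  have hv : ∀ k, ContinuousOn (v k) (Ici 0) :=
    fun k => (hvc k).mono (Ici_subset_Ici.2 (by linarith))
  have hv'F : ∀ k, EqOn (v' k) (csAlignment ψ σ τ x v k) (Ioi 0) := fun k r hr => hode k r hr
  have hbound : ∀ s > (0 : ℝ), ‖v' i s‖ ≤ csDiam v (s - τ) + ‖v i (s - τ) - v i (s - σ)‖ :=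
    fun s hs => hv'F i hs ▸ norm_csAlignment_le (fun r hr => (hψpos r hr).le) hψbdd σ τ x v i s
  exact norm_delay_sub_le hσ hστ hβ hv hvder (continuousOn_csAlignment hστ hψcont hxc hvc) hv'F
    i j hbound ht

theorem stmt_14
    (N d : ℕ) (hN : 2 ≤ N) (hd : 1 ≤ d)
    (σ τ : ℝ) (hσ : 0 ≤ σ) (hστ : σ ≤ τ) (hτ : 0 < τ)
    (β : ℝ) (hβ : 0 < β)
    (ψ : ℝ → ℝ)
    (hψpos : ∀ s, 0 ≤ s → 0 < ψ s)
    (hψcont : ContinuousOn ψ (Set.Ici 0))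
    (hψmono : ∀ s t, 0 ≤ s → s ≤ t → ψ t ≤ ψ s)
    (hψbdd : ∀ s, 0 ≤ s → ψ s ≤ 1)
    (x v v' : Fin N → ℝ → EuclideanSpace ℝ (Fin d))
    (hxc : ∀ i, ContinuousOn (x i) (Set.Ici (-τ)))
    (hvc : ∀ i, ContinuousOn (v i) (Set.Ici (-τ)))
    (hxder : ∀ i, ∀ t, -τ < t → HasDerivAt (x i) (v i t) t)
    (hvder : ∀ i, ∀ t > (0:ℝ), HasDerivAt (v i) (v' i t) t)
    (hode : ∀ i, ∀ t > (0:ℝ),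
      v' i t = ∑ j ∈ Finset.univ.erase i,
        (ψ ‖x i (t - σ) - x j (t - τ)‖ / (N - 1)) • (v j (t - τ) - v i (t - σ))) :
    ∀ (i j : Fin N), ∀ t, 2 * τ ≤ t →
      ‖v j (t - τ) - v i (t - σ)‖ ≤ csDiam v (t - τ)
        + (∫ s in (t - τ)..(t - σ), csDiam v (s - τ))
        + β⁻¹ * Real.exp (2 * τ) * csG β τ v v' (t - σ) :=
  stmt_14_general N d σ τ hσ hστ β hβ ψ hψpos hψcont hψbdd x v v' hxc hvc hvder hode
end

section
/- Let 0 < σ ≤ τ and K := ⌈2τ/σ⌉ (the smallest integer with Kσ ≥ 2τ). Then for every solution of the delayed Cucker–Smale system and all indices i, j, one has |x_j(τ) − x_i(2τ−σ)| ≤ Δ^0_x + 𝒲^K_σ · Δ^0_v. -/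
open scoped BigOperators
open MeasureTheory

/-- `𝒲^K_σ = Z^K_σ - (1+σ)(Z^{K-1}_σ + 1)`. -/
noncomputable def csCalW (σ : ℝ) (K : ℕ) : ℝ :=
  csZ σ K - (1 + σ) * (csZ σ (K - 1) + 1)

/-- Elementary power inequality: for `a ≥ 1 ≥ b ≥ 0`, `(a+b-1)^n + 1 ≤ a^n + b^n`. -/
lemma aux_pow_ineq (a b : ℝ) (ha : 1 ≤ a) (hb0 : 0 ≤ b) (hb1 : b ≤ 1) :
    ∀ n : ℕ, (a + b - 1)^n + 1 ≤ a^n + b^n := by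
  intro n
  induction n with
  | zero => norm_num
  | succ n ih =>
    have h1 : 1 ≤ a^n := one_le_pow₀ ha
    have h2 : b^n ≤ 1 := pow_le_one₀ hb0 hb1
    have h3 : 0 ≤ b^n := pow_nonneg hb0 n
    have key : (a+b-1)^(n+1) ≤ (a+b-1) * (a^n + b^n - 1) := by
      rw [pow_succ]
      nlinarith [ih]
    have e1 : (0:ℝ) ≤ (1-b)*(a^n-1) := mul_nonneg (by linarith) (by linarith)
    have e2 : (0:ℝ) ≤ (a-1)*(1-b^n) := mul_nonneg (by linarith) (by linarith)
    rw [pow_succ a n, pow_succ b n]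
    nlinarith [key, e1, e2]

/-- Closed form for `csCalW`. -/
lemma aux_calW_eq (σ : ℝ) (hσ : 0 < σ) (K : ℕ) (hK : 1 ≤ K) :
    csCalW σ K = (((1+σ) + Real.sqrt (σ*(1+σ)))^K + ((1+σ) - Real.sqrt (σ*(1+σ)))^K)/2
      - (1+σ) := by
  have hr0 : 0 < Real.sqrt (σ*(1+σ)) := Real.sqrt_pos.2 (by nlinarith)
  set r := Real.sqrt (σ*(1+σ)) with hr
  obtain ⟨n, rfl⟩ : ∃ n, K = n + 1 := ⟨K - 1, by omega⟩
  have h1 : n + 1 - 1 = n := by omega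
  have comb : ∀ A B : ℝ, A/(2*r) - (1+σ)*(B/(2*r)) = (A - (1+σ)*B)/(2*r) := by
    intro A B; field_simp
  have key : csZ σ (n+1) - (1+σ) * csZ σ n
      = (r * (((1+σ)+r)^(n+1) + ((1+σ)-r)^(n+1)))/(2*r) := by
    rw [csZ, csZ, ← hr, comb]
    congr 1
    ring
  have key2 : (r * (((1+σ)+r)^(n+1) + ((1+σ)-r)^(n+1)))/(2*r)
      = (((1+σ)+r)^(n+1) + ((1+σ)-r)^(n+1))/2 := by
    rw [mul_comm 2 r, mul_div_mul_left _ _ (ne_of_gt hr0)]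
  have expand : csZ σ (n+1) - (1+σ) * (csZ σ n + 1)
      = (csZ σ (n+1) - (1+σ) * csZ σ n) - (1+σ) := by ring
  rw [csCalW, h1, expand, key, key2]

/-- Access lemma for the nested suprema in `csDelta0`. -/
lemma aux_le_csDelta0 {N d : ℕ} (hN : 0 < N) {τ : ℝ} (hτ : 0 ≤ τ)
    (w : Fin N → ℝ → EuclideanSpace ℝ (Fin d)) (M : ℝ)
    (hM : ∀ i : Fin N, ∀ s : ℝ, s ∈ Set.Icc (-τ) (0:ℝ) → ‖w i s‖ ≤ M)
    (i j : Fin N) (s t : ℝ) (hs : s ∈ Set.Icc (-τ) (0:ℝ)) (ht : t ∈ Set.Icc (-τ) (0:ℝ)) :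
    ‖w i s - w j t‖ ≤ csDelta0 τ w := by
  haveI : Nonempty (Fin N) := ⟨⟨0, hN⟩⟩
  haveI : Nonempty (Set.Icc (-τ) (0:ℝ)) := ⟨⟨0, by constructor <;> linarith⟩⟩
  have hb : ∀ (i j : Fin N) (s' t' : Set.Icc (-τ) (0:ℝ)), ‖w i s' - w j t'‖ ≤ 2*M := by
    intro i j s' t'
    calc ‖w i s' - w j t'‖ ≤ ‖w i s'‖ + ‖w j t'‖ := norm_sub_le _ _
    _ ≤ 2*M := by
        have := hM i s' s'.2; have := hM j t' t'.2; linarith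
  have h1 : ∀ (i j : Fin N) (s' : Set.Icc (-τ) (0:ℝ)),
      (⨆ t' : Set.Icc (-τ) (0:ℝ), ‖w i s' - w j t'‖) ≤ 2*M :=
    fun i j s' => ciSup_le (fun t' => hb i j s' t')
  have h2 : ∀ (i j : Fin N),
      (⨆ s' : Set.Icc (-τ) (0:ℝ), ⨆ t' : Set.Icc (-τ) (0:ℝ), ‖w i s' - w j t'‖) ≤ 2*M :=
    fun i j => ciSup_le (fun s' => h1 i j s')
  have h3 : ∀ i : Fin N,
      (⨆ j : Fin N, ⨆ s' : Set.Icc (-τ) (0:ℝ), ⨆ t' : Set.Icc (-τ) (0:ℝ),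
        ‖w i s' - w j t'‖) ≤ 2*M :=
    fun i => ciSup_le (fun j => h2 i j)
  calc ‖w i s - w j t‖
      ≤ ⨆ t' : Set.Icc (-τ) (0:ℝ), ‖w i s - w j t'‖ := by
        refine le_ciSup_of_le ⟨2*M, ?_⟩ ⟨t, ht⟩ ?_
        · rintro y ⟨t', rfl⟩; exact hb i j ⟨s, hs⟩ t'
        · exact le_refl _
    _ ≤ ⨆ s' : Set.Icc (-τ) (0:ℝ), ⨆ t' : Set.Icc (-τ) (0:ℝ), ‖w i s' - w j t'‖ := by
        refine le_ciSup_of_le ⟨2*M, ?_⟩ ⟨s, hs⟩ ?_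
        · rintro y ⟨s', rfl⟩; exact h1 i j s'
        · exact le_refl _
    _ ≤ ⨆ j' : Fin N, ⨆ s' : Set.Icc (-τ) (0:ℝ), ⨆ t' : Set.Icc (-τ) (0:ℝ),
          ‖w i s' - w j' t'‖ := by
        refine le_ciSup_of_le ⟨2*M, ?_⟩ j (le_refl _)
        rintro y ⟨j', rfl⟩; exact h2 i j'
    _ ≤ csDelta0 τ w := by
        refine le_ciSup_of_le ⟨2*M, ?_⟩ i (le_refl _)
        rintro y ⟨i', rfl⟩; exact h3 i'

set_option maxHeartbeats 2000000 in
theorem stmt_16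
    (N d : ℕ) (hN : 2 ≤ N) (hd : 1 ≤ d)
    (σ τ : ℝ) (hσ : 0 < σ) (hστ : σ ≤ τ)
    (K : ℕ) (hK : K = ⌈2 * τ / σ⌉₊)
    (ψ : ℝ → ℝ)
    (hψpos : ∀ s, 0 ≤ s → 0 < ψ s)
    (hψcont : ContinuousOn ψ (Set.Ici 0))
    (hψmono : ∀ s t, 0 ≤ s → s ≤ t → ψ t ≤ ψ s)
    (hψbdd : ∀ s, 0 ≤ s → ψ s ≤ 1)
    (x v v' : Fin N → ℝ → EuclideanSpace ℝ (Fin d))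
    (hxc : ∀ i, ContinuousOn (x i) (Set.Ici (-τ)))
    (hvc : ∀ i, ContinuousOn (v i) (Set.Ici (-τ)))
    (hxder : ∀ i, ∀ t, -τ < t → HasDerivAt (x i) (v i t) t)
    (hvder : ∀ i, ∀ t > (0:ℝ), HasDerivAt (v i) (v' i t) t)
    (hode : ∀ i, ∀ t > (0:ℝ),
      v' i t = ∑ j ∈ Finset.univ.erase i,
        (ψ ‖x i (t - σ) - x j (t - τ)‖ / (N - 1)) • (v j (t - τ) - v i (t - σ))) :
    ∀ (i j : Fin N),
      ‖x j τ - x i (2 * τ - σ)‖ ≤ csDelta0 τ x + csCalW σ K * csDelta0 τ v := by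
  intro i j
  haveI : Nonempty (Fin N) := ⟨⟨0, by omega⟩⟩
  have hτ0 : 0 < τ := lt_of_lt_of_le hσ hστ
  have hIccIci : Set.Icc (-τ) (0:ℝ) ⊆ Set.Ici (-τ) := fun z hz => hz.1
  -- uniform bounds on initial data
  have hMv' : ∀ p : Fin N, ∃ C, ∀ s ∈ Set.Icc (-τ) (0:ℝ), ‖v p s‖ ≤ C := fun p =>
    isCompact_Icc.exists_bound_of_continuousOn ((hvc p).mono hIccIci)
  have hMx' : ∀ p : Fin N, ∃ C, ∀ s ∈ Set.Icc (-τ) (0:ℝ), ‖x p s‖ ≤ C := fun p =>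
    isCompact_Icc.exists_bound_of_continuousOn ((hxc p).mono hIccIci)
  choose Cv hCv using hMv'
  choose Cx hCx using hMx'
  set Mv := Finset.univ.sup' Finset.univ_nonempty Cv with hMvdef
  set Mx := Finset.univ.sup' Finset.univ_nonempty Cx with hMxdef
  have hMv : ∀ p : Fin N, ∀ s : ℝ, s ∈ Set.Icc (-τ) (0:ℝ) → ‖v p s‖ ≤ Mv :=
    fun p s hs => le_trans (hCv p s hs) (Finset.le_sup' Cv (Finset.mem_univ p))
  have hMx : ∀ p : Fin N, ∀ s : ℝ, s ∈ Set.Icc (-τ) (0:ℝ) → ‖x p s‖ ≤ Mx :=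
    fun p s hs => le_trans (hCx p s hs) (Finset.le_sup' Cx (Finset.mem_univ p))
  set Δv := csDelta0 τ v with hΔvdef
  set Δx := csDelta0 τ x with hΔxdef
  have hB0 : ∀ (p q : Fin N) (s u : ℝ), s ∈ Set.Icc (-τ) (0:ℝ) → u ∈ Set.Icc (-τ) (0:ℝ) →
      ‖v p s - v q u‖ ≤ Δv :=
    fun p q s u hs hu => aux_le_csDelta0 (by omega) hτ0.le v Mv hMv p q s u hs hu
  have hΔv0 : 0 ≤ Δv := by
    have := hB0 i i 0 0 ⟨by linarith, le_refl 0⟩ ⟨by linarith, le_refl 0⟩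
    have h0 : ‖v i 0 - v i 0‖ = 0 := by simp
    linarith [norm_nonneg (v i 0 - v i 0)]
  -- the velocity diameter bound
  have hV : ∀ k : ℕ, ∀ (p q : Fin N) (s u : ℝ), -τ ≤ s → s ≤ (k:ℝ)*σ → -τ ≤ u →
      u ≤ (k:ℝ)*σ → ‖v p s - v q u‖ ≤ (1+2*σ)^k * Δv := by
    intro k
    induction k with
    | zero =>
      intro p q s u h1 h2 h3 h4
      simp only [Nat.cast_zero, zero_mul] at h2 h4
      simpa using hB0 p q s u ⟨h1, h2⟩ ⟨h3, h4⟩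
    | succ k ih =>
      have hNR : (1:ℝ) ≤ (N:ℝ) - 1 := by
        have : (2:ℝ) ≤ (N:ℝ) := by exact_mod_cast hN
        linarith
      have hkσ0 : (0:ℝ) ≤ (k:ℝ)*σ := by positivity
      set C := (1+2*σ)^k * Δv with hCdef
      have hC0 : 0 ≤ C := mul_nonneg (pow_nonneg (by linarith) k) hΔv0
      -- derivative bound on (0, (k+1)σ]
      have hD : ∀ (p : Fin N) (t : ℝ), 0 < t → t ≤ ((k:ℝ)+1)*σ → ‖v' p t‖ ≤ C := by
        intro p t ht0 ht1
        rw [hode p t ht0]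
        have hcard : (Finset.univ.erase p).card = N - 1 := by
          rw [Finset.card_erase_of_mem (Finset.mem_univ p), Finset.card_univ, Fintype.card_fin]
        calc ‖∑ q ∈ Finset.univ.erase p,
              (ψ ‖x p (t - σ) - x q (t - τ)‖ / (N - 1)) • (v q (t - τ) - v p (t - σ))‖
            ≤ ∑ q ∈ Finset.univ.erase p,
              ‖(ψ ‖x p (t - σ) - x q (t - τ)‖ / (N - 1)) • (v q (t - τ) - v p (t - σ))‖ :=
              norm_sum_le _ _
          _ ≤ ∑ q ∈ Finset.univ.erase p, (1/((N:ℝ)-1)) * C := by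
              refine Finset.sum_le_sum (fun q _ => ?_)
              rw [norm_smul, Real.norm_eq_abs,
                abs_of_nonneg (div_nonneg (hψpos _ (norm_nonneg _)).le (by linarith))]
              have hterm : ‖v q (t - τ) - v p (t - σ)‖ ≤ C := by
                refine ih q p (t - τ) (t - σ) (by linarith) (by linarith) (by linarith)
                  (by linarith)
              have hcoef : ψ ‖x p (t - σ) - x q (t - τ)‖ / ((N:ℝ) - 1) ≤ 1/((N:ℝ)-1) := by
                have hpos : (0:ℝ) < (N:ℝ)-1 := by linarith
                exact (div_le_div_iff_of_pos_right hpos).2 (hψbdd _ (norm_nonneg _))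
              exact mul_le_mul hcoef hterm (norm_nonneg _)
                (by have hpos : (0:ℝ) < (N:ℝ)-1 := by linarith
                    positivity)
          _ = C := by
              rw [Finset.sum_const, hcard, nsmul_eq_mul]
              have hNcast : ((N - 1 : ℕ) : ℝ) = (N:ℝ) - 1 := by
                have : 1 ≤ N := by omega
                push_cast [this]; ring
              rw [hNcast]
              field_simp
      -- one-step increment bound
      have hA : ∀ (p : Fin N) (w : ℝ), (k:ℝ)*σ ≤ w → w ≤ ((k:ℝ)+1)*σ →
          ‖v p w - v p ((k:ℝ)*σ)‖ ≤ C * σ := by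
        intro p w hw1 hw2
        rcases eq_or_lt_of_le hw1 with heq | hlt
        · rw [← heq, sub_self, norm_zero]; exact mul_nonneg hC0 hσ.le
        · have hcontv : ContinuousAt (v p) ((k:ℝ)*σ) :=
            (hvc p).continuousAt (Ici_mem_nhds (by linarith))
          have hcont : ContinuousAt (fun a : ℝ => ‖v p w - v p a‖) ((k:ℝ)*σ) :=
            (continuousAt_const.sub hcontv).norm
          have hev : ∀ a ∈ Set.Ioo ((k:ℝ)*σ) w, ‖v p w - v p a‖ ≤ C * σ := by
            intro a ha
            have mvt := Convex.norm_image_sub_le_of_norm_hasDerivWithin_le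
              (f := v p) (f' := v' p) (C := C) (s := Set.Icc a w)
              (fun z hz => (hvder p z (by
                have := hz.1; have := ha.1; linarith)).hasDerivWithinAt)
              (fun z hz => hD p z (by have := hz.1; have := ha.1; linarith)
                (by have := hz.2; linarith))
              (convex_Icc a w)
              (Set.left_mem_Icc.2 ha.2.le)
              (Set.right_mem_Icc.2 ha.2.le)
            have : ‖v p w - v p a‖ ≤ C * ‖w - a‖ := mvt
            have habs : ‖w - a‖ ≤ σ := by
              rw [Real.norm_eq_abs, abs_of_nonneg (by linarith [ha.2.le])]
              have := ha.1
              linarith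
            calc ‖v p w - v p a‖ ≤ C * ‖w - a‖ := this
              _ ≤ C * σ := by
                  exact mul_le_mul_of_nonneg_left habs hC0
          refine le_of_tendsto (hcont.tendsto.mono_left nhdsWithin_le_nhds :
            Filter.Tendsto (fun a : ℝ => ‖v p w - v p a‖) (nhdsWithin ((k:ℝ)*σ)
              (Set.Ioi ((k:ℝ)*σ))) _) ?_
          filter_upwards [Ioo_mem_nhdsGT_of_mem ⟨le_refl _, hlt⟩] with a ha
          exact hev a ha
      -- assemble
      intro p q s u hs1 hs2 hu1 hu2
      push_cast at hs2 hu2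
      have houter : ∀ (p : Fin N) (w : ℝ), -τ ≤ w → w ≤ ((k:ℝ)+1)*σ →
          ‖v p w - v p (min w ((k:ℝ)*σ))‖ ≤ C * σ := by
        intro p w h1 h2
        rcases le_or_gt w ((k:ℝ)*σ) with h | h
        · rw [min_eq_left h, sub_self, norm_zero]; exact mul_nonneg hC0 hσ.le
        · rw [min_eq_right h.le]; exact hA p w h.le h2
      have hmid : ‖v p (min s ((k:ℝ)*σ)) - v q (min u ((k:ℝ)*σ))‖ ≤ C :=
        ih p q _ _ (le_min hs1 (by linarith)) (min_le_right _ _)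
          (le_min hu1 (by linarith)) (min_le_right _ _)
      have tri : v p s - v q u = (v p s - v p (min s ((k:ℝ)*σ)))
          + ((v p (min s ((k:ℝ)*σ)) - v q (min u ((k:ℝ)*σ)))
          + (v q (min u ((k:ℝ)*σ)) - v q u)) := by abel
      have hlast : ‖v q (min u ((k:ℝ)*σ)) - v q u‖ ≤ C * σ := by
        rw [norm_sub_rev]; exact houter q u hu1 hu2
      have hfirst : ‖v p s - v p (min s ((k:ℝ)*σ))‖ ≤ C * σ := houter p s hs1 hs2
      have hpow : (1+2*σ)^(k+1) * Δv = C*σ + (C + C*σ) := by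
        rw [hCdef, pow_succ]; ring
      rw [tri, hpow]
      exact le_trans (norm_add_le _ _)
        (add_le_add hfirst (le_trans (norm_add_le _ _) (add_le_add hmid hlast)))
  -- FTC
  have hFTC : ∀ (p : Fin N) (a b : ℝ), -τ < a → -τ < b →
      (∫ s in a..b, v p s) = x p b - x p a := by
    intro p a b ha hb
    have hmin : -τ < min a b := lt_min ha hb
    apply intervalIntegral.integral_eq_sub_of_hasDerivAt
    · intro z hz
      exact hxder p z (lt_of_lt_of_le hmin hz.1)
    · apply ContinuousOn.intervalIntegrable
      exact (hvc p).mono (fun z hz => le_trans hmin.le hz.1)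
  -- integral estimate
  -- continuity and integrability of the shifted difference
  have hfc : ContinuousOn (fun s => v j (s + (σ-τ)) - v i s) (Set.Icc 0 (2*τ-σ)) := by
    apply ContinuousOn.sub
    · refine (hvc j).comp (Continuous.continuousOn (by continuity)) ?_
      intro z hz
      have := hz.1
      simp only [Set.mem_Ici]
      linarith
    · exact (hvc i).mono (fun z hz => by
        have := hz.1; simp only [Set.mem_Ici]; linarith)
  have hintf : ∀ a b : ℝ, 0 ≤ a → a ≤ b → b ≤ 2*τ-σ →
      IntervalIntegrable (fun s => v j (s + (σ-τ)) - v i s) volume a b := by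
    intro a b h1 h2 h3
    apply ContinuousOn.intervalIntegrable
    apply hfc.mono
    rw [Set.uIcc_of_le h2]
    exact Set.Icc_subset_Icc h1 h3
  have hIest : ∀ n : ℕ, ∀ b : ℝ, 0 ≤ b → b ≤ (n:ℝ)*σ → b ≤ 2*τ-σ →
      ‖∫ s in (0:ℝ)..b, (v j (s + (σ-τ)) - v i s)‖
        ≤ (∑ k ∈ Finset.range n, σ*(1+2*σ)^(k+1)) * Δv := by
    intro n
    induction n with
    | zero =>
      intro b h1 h2 h3
      simp only [Nat.cast_zero, zero_mul] at h2
      have hb0 : b = 0 := le_antisymm h2 h1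
      subst hb0
      simp
    | succ n ihn =>
      intro b h1 h2 h3
      push_cast at h2
      have hnσ : (0:ℝ) ≤ (n:ℝ)*σ := by positivity
      set b0 := min b ((n:ℝ)*σ) with hb0def
      have hb00 : 0 ≤ b0 := le_min h1 hnσ
      have hb0b : b0 ≤ b := min_le_left _ _
      have hsplit : (∫ s in (0:ℝ)..b, (v j (s + (σ-τ)) - v i s))
          = (∫ s in (0:ℝ)..b0, (v j (s + (σ-τ)) - v i s))
            + ∫ s in b0..b, (v j (s + (σ-τ)) - v i s) :=
        (intervalIntegral.integral_add_adjacent_intervals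
          (hintf 0 b0 (le_refl 0) hb00 (le_trans hb0b h3))
          (hintf b0 b hb00 hb0b h3)).symm
      rw [hsplit, Finset.sum_range_succ, add_mul]
      refine le_trans (norm_add_le _ _) (add_le_add ?_ ?_)
      · exact ihn b0 hb00 (min_le_right _ _) (le_trans hb0b h3)
      · have hCb : (0:ℝ) ≤ (1+2*σ)^(n+1) * Δv :=
          mul_nonneg (pow_nonneg (by linarith) _) hΔv0
        have hbound : ∀ z ∈ Set.uIoc b0 b, ‖v j (z + (σ-τ)) - v i z‖
            ≤ (1+2*σ)^(n+1) * Δv := by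
          intro z hz
          rw [Set.uIoc_of_le hb0b] at hz
          have hz1 : b0 < z := hz.1
          have hz2 : z ≤ b := hz.2
          have hzn : z ≤ ((n:ℝ)+1)*σ := by linarith
          refine hV (n+1) j i (z + (σ-τ)) z (by linarith) ?_ (by linarith) ?_
          · push_cast; linarith
          · push_cast; linarith
        have hnorm := intervalIntegral.norm_integral_le_of_norm_le_const hbound
        have habs : |b - b0| ≤ σ := by
          rw [abs_of_nonneg (by linarith)]
          rcases le_or_gt b ((n:ℝ)*σ) with h | h
          · rw [hb0def, min_eq_left h]; linarith
          · rw [hb0def, min_eq_right h.le]; linarith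
        calc ‖∫ s in b0..b, (v j (s + (σ-τ)) - v i s)‖
            ≤ (1+2*σ)^(n+1) * Δv * |b - b0| := hnorm
          _ ≤ (1+2*σ)^(n+1) * Δv * σ := mul_le_mul_of_nonneg_left habs hCb
          _ = σ*(1+2*σ)^(n+1) * Δv := by ring
  -- facts about K
  have hK2 : 2 ≤ K := by
    have h12 : (1:ℕ) < ⌈2*τ/σ⌉₊ := Nat.lt_ceil.2 (by
      push_cast
      rw [lt_div_iff₀ hσ]
      linarith)
    omega
  have hKσ : 2*τ ≤ (K:ℝ)*σ := by
    rw [hK]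
    have h0 := Nat.le_ceil (2*τ/σ)
    calc 2*τ = (2*τ/σ)*σ := by field_simp
      _ ≤ ((⌈2*τ/σ⌉₊:ℕ):ℝ)*σ := mul_le_mul_of_nonneg_right h0 hσ.le
  have hKcast : ((K-1:ℕ):ℝ) = (K:ℝ)-1 := by
    have h1 : 1 ≤ K := by omega
    push_cast [h1]
    ring
  have h2τσ : 0 ≤ 2*τ-σ := by linarith
  -- decomposition of the displacement
  have hx1 : x j τ - x j (σ-τ) = ∫ s in (σ-τ)..τ, v j s :=
    (hFTC j (σ-τ) τ (by linarith) (by linarith)).symm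
  have hx2 : x i (2*τ-σ) - x i 0 = ∫ s in (0:ℝ)..(2*τ-σ), v i s :=
    (hFTC i 0 (2*τ-σ) (by linarith) (by linarith)).symm
  have hshift : (∫ s in (0:ℝ)..(2*τ-σ), v j (s + (σ-τ))) = ∫ s in (σ-τ)..τ, v j s := by
    rw [intervalIntegral.integral_comp_add_right (fun s => v j s) (σ-τ)]
    have e1 : (0:ℝ)+(σ-τ) = σ-τ := by ring
    have e2 : (2*τ-σ)+(σ-τ) = τ := by ring
    rw [e1, e2]
  have hIj : IntervalIntegrable (fun s => v j (s + (σ-τ))) volume 0 (2*τ-σ) := by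
    apply ContinuousOn.intervalIntegrable
    refine (hvc j).comp (Continuous.continuousOn (by continuity)) ?_
    intro z hz
    rw [Set.uIcc_of_le h2τσ] at hz
    have := hz.1
    simp only [Set.mem_Ici]
    linarith
  have hIi : IntervalIntegrable (v i) volume 0 (2*τ-σ) := by
    apply ContinuousOn.intervalIntegrable
    refine (hvc i).mono ?_
    intro z hz
    rw [Set.uIcc_of_le h2τσ] at hz
    have := hz.1
    simp only [Set.mem_Ici]
    linarith
  have hmain : x j τ - x i (2*τ-σ) = (x j (σ-τ) - x i 0)
      + ∫ s in (0:ℝ)..(2*τ-σ), (v j (s + (σ-τ)) - v i s) := by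
    rw [intervalIntegral.integral_sub hIj hIi, hshift, ← hx1, ← hx2]
    abel
  have hxbound : ‖x j (σ-τ) - x i 0‖ ≤ Δx :=
    aux_le_csDelta0 (by omega) hτ0.le x Mx hMx j i (σ-τ) 0
      ⟨by linarith, by linarith⟩ ⟨by linarith, le_refl 0⟩
  have hIfinal := hIest (K-1) (2*τ-σ) (by linarith)
    (by
      rw [hKcast]
      have : ((K:ℝ)-1)*σ = (K:ℝ)*σ - σ := by ring
      linarith)
    (le_refl _)
  -- geometric sum closed form
  have hgeom : ∀ m : ℕ, 2*(∑ k ∈ Finset.range m, σ*(1+2*σ)^(k+1))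
      = (1+2*σ)^(m+1) - (1+2*σ) := by
    intro m
    induction m with
    | zero => simp
    | succ m ihm =>
      rw [Finset.sum_range_succ, mul_add, ihm, pow_succ ((1:ℝ)+2*σ) (m+1)]
      ring
  have hKK : K - 1 + 1 = K := by omega
  have hsum : (∑ k ∈ Finset.range (K-1), σ*(1+2*σ)^(k+1)) = ((1+2*σ)^K - (1+2*σ))/2 := by
    have := hgeom (K-1)
    rw [hKK] at this
    linarith
  -- the power inequality
  set r := Real.sqrt (σ*(1+σ)) with hrdef
  have hr0 : 0 ≤ r := Real.sqrt_nonneg _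
  have hrle : r ≤ 1+σ := by
    rw [hrdef]
    calc Real.sqrt (σ*(1+σ)) ≤ Real.sqrt ((1+σ)^2) := Real.sqrt_le_sqrt (by nlinarith)
      _ = 1+σ := Real.sqrt_sq (by linarith)
  have hrge : σ ≤ r := by
    rw [hrdef]
    calc σ = Real.sqrt (σ^2) := (Real.sqrt_sq hσ.le).symm
      _ ≤ Real.sqrt (σ*(1+σ)) := Real.sqrt_le_sqrt (by nlinarith)
  have hpow := aux_pow_ineq ((1+σ)+r) ((1+σ)-r) (by linarith) (by linarith) (by linarith) K
  have hbase : ((1+σ)+r) + ((1+σ)-r) - 1 = 1+2*σ := by ring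
  rw [hbase] at hpow
  have hW : csCalW σ K = (((1+σ)+r)^K + ((1+σ)-r)^K)/2 - (1+σ) :=
    aux_calW_eq σ hσ K (by omega)
  have hsumW : (∑ k ∈ Finset.range (K-1), σ*(1+2*σ)^(k+1)) ≤ csCalW σ K := by
    rw [hsum, hW]
    linarith
  calc ‖x j τ - x i (2*τ-σ)‖
      = ‖(x j (σ-τ) - x i 0) + ∫ s in (0:ℝ)..(2*τ-σ), (v j (s + (σ-τ)) - v i s)‖ := by
        rw [hmain]
    _ ≤ ‖x j (σ-τ) - x i 0‖ + ‖∫ s in (0:ℝ)..(2*τ-σ), (v j (s + (σ-τ)) - v i s)‖ :=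
        norm_add_le _ _
    _ ≤ Δx + (∑ k ∈ Finset.range (K-1), σ*(1+2*σ)^(k+1)) * Δv := add_le_add hxbound hIfinal
    _ ≤ Δx + csCalW σ K * Δv := by
        have := mul_le_mul_of_nonneg_right hsumW hΔv0
        linarith
end

section
/- (Halanay-type inequality.) Let τ > 0 and α, γ, η > 0 with α + γ < η. Let u : [0,∞) → ℝ be a nonnegative continuous function that is locally Lipschitz on (2τ,∞) and satisfies, for almost all t > 2τ, u'(t) ≤ (α/τ) ∫_{t−τ}^{t} u(s−τ) ds + γ u(t−τ) − η u(t). Then u(t) ≤ (max_{s ∈ [0,2τ]} u(s)) · e^{−Γ(t−2τ)} for all t ≥ 2τ, where Γ ∈ (0,η) is the unique solution of e^{Γτ}(e^{Γτ}α + γ) + Γ = η. -/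
/-!
Compare `u` with `W t = K e^{-Γ (t - 2τ)}` for any `K` exceeding `u` on `[0, 2τ]`. If `u` ever
reaches `W`, let `T > 2τ` be the first time it does. Up to `T` the delayed terms are bounded
through `u ≤ W`, and the equation defining `Γ` turns them into exactly `(η - Γ) W`, so
`(W - u)' ≥ -η (W - u)` almost everywhere on `(2τ, T)`. Since `u` is locally Lipschitz there,
`(W - u) e^{ηt}` is absolutely continuous, hence nondecreasing, and stays positive up to `T`:
a contradiction. Letting `K` decrease to the supremum gives the bound.
-/

open MeasureTheory Set Filter Topology Real

theorem AbsolutelyContinuousOnInterval.le_of_ae_deriv_nonneg {f : ℝ → ℝ} {a b : ℝ}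
    (hab : a ≤ b) (hf : AbsolutelyContinuousOnInterval f a b)
    (hd : ∀ᵐ x, x ∈ Ioo a b → 0 ≤ deriv f x) : f a ≤ f b := by
  rw [← sub_nonneg, ← hf.integral_deriv_eq_sub]
  refine intervalIntegral.integral_nonneg_of_ae_restrict hab ?_
  rw [EventuallyLE, ← Measure.restrict_congr_set Ioo_ae_eq_Icc,
    ae_restrict_iff' measurableSet_Ioo]
  simpa using hd

theorem AbsolutelyContinuousOnInterval.mul_exp_le_of_ae_neg_mul_le_deriv {v : ℝ → ℝ}
    {a b η : ℝ} (hab : a ≤ b) (hv : AbsolutelyContinuousOnInterval v a b)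
    (hd : ∀ᵐ x, x ∈ Ioo a b → DifferentiableAt ℝ v x → -(η * v x) ≤ deriv v x) :
    v a * exp (η * a) ≤ v b * exp (η * b) := by
  have hexp : AbsolutelyContinuousOnInterval (fun x ↦ exp (η * x)) a b :=
    ContDiffOn.absolutelyContinuousOnInterval (by fun_prop)
  refine (hv.mul hexp).le_of_ae_deriv_nonneg hab ?_
  filter_upwards [hd] with x hx hxab
  by_cases hvx : DifferentiableAt ℝ v x
  · have hder : HasDerivAt (fun x ↦ v x * exp (η * x))
        ((deriv v x + η * v x) * exp (η * x)) x := by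
      have hexp' : HasDerivAt (fun x ↦ exp (η * x)) (exp (η * x) * η) x :=
        ((hasDerivAt_id x).const_mul η).exp.congr_deriv (by simp)
      exact (hvx.hasDerivAt.mul hexp').congr_deriv (by ring)
    rw [Pi.mul_def, hder.deriv]
    exact mul_nonneg (by linarith [hx hxab hvx]) (exp_pos _).le
  · -- then the product is not differentiable either, and its `deriv` is the junk value `0`
    have : ¬ DifferentiableAt ℝ (fun x ↦ v x * exp (η * x)) x := fun h ↦ hvx <| by
      rw [show v = fun y ↦ v y * exp (η * y) * exp (-η * y) by
        ext y; rw [mul_assoc, ← exp_add]; simp]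
      exact h.mul (by fun_prop)
    rw [Pi.mul_def, deriv_zero_of_not_differentiableAt this]

theorem exists_first_le_of_lt {f g : ℝ → ℝ} {a t : ℝ} (hat : a ≤ t)
    (hf : ContinuousOn f (Icc a t)) (hg : ContinuousOn g (Icc a t))
    (ha : f a < g a) (ht : g t ≤ f t) :
    ∃ T ∈ Ioc a t, g T ≤ f T ∧ ∀ s ∈ Ico a T, f s < g s := by
  have hS : IsCompact {s ∈ Icc a t | g s ≤ f s} :=
    isCompact_Icc.of_isClosed_subset (isClosed_Icc.isClosed_le hg hf) (sep_subset _ _)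
  obtain ⟨T, ⟨hTmem, hT⟩, hleast⟩ := hS.exists_isLeast ⟨t, ⟨hat, le_rfl⟩, ht⟩
  have haT : a ≠ T := by rintro rfl; exact (hT.trans_lt ha).false
  refine ⟨T, ⟨lt_of_le_of_ne hTmem.1 haT, hTmem.2⟩, hT, fun s hs ↦ ?_⟩
  by_contra! hgf
  exact (hleast ⟨⟨hs.1, hs.2.le.trans hTmem.2⟩, hgf⟩).not_gt hs.2

theorem exp_neg_mul_sub_eq (Γ c r s : ℝ) :
    exp (-Γ * (r - c)) = exp (Γ * (s - r)) * exp (-Γ * (s - c)) := by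
  rw [← exp_add]; ring_nf

theorem halanay_delay_terms_le {u : ℝ → ℝ} {τ α γ Γ K c s : ℝ} (hτ : 0 < τ) (hα : 0 ≤ α)
    (hγ : 0 ≤ γ) (hΓ : 0 ≤ Γ) (hK : 0 ≤ K) (hu : ContinuousOn u (Icc (s - 2 * τ) (s - τ)))
    (hle : ∀ r ∈ Icc (s - 2 * τ) (s - τ), u r ≤ K * exp (-Γ * (r - c))) :
    α / τ * (∫ r in (s - τ)..s, u (r - τ)) + γ * u (s - τ)
      ≤ exp (Γ * τ) * (exp (Γ * τ) * α + γ) * (K * exp (-Γ * (s - c))) := by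
  set E := K * exp (-Γ * (s - c))
  have hpast : ∀ r ∈ Icc (s - 2 * τ) (s - τ), u r ≤ exp (Γ * τ) * exp (Γ * τ) * E := by
    intro r hr
    calc u r ≤ K * exp (-Γ * (r - c)) := hle r hr
      _ ≤ K * exp (-Γ * (s - 2 * τ - c)) :=
        mul_le_mul_of_nonneg_left (exp_le_exp.2 (by nlinarith [hr.1])) hK
      _ = exp (Γ * τ) * exp (Γ * τ) * E := by
        rw [exp_neg_mul_sub_eq Γ c _ s, show s - (s - 2 * τ) = τ + τ by ring, mul_add,
          exp_add]
        ring
  have hshift : IntervalIntegrable (fun r ↦ u (r - τ)) volume (s - τ) s := by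
    refine ContinuousOn.intervalIntegrable (hu.comp (by fun_prop) fun r hr ↦ ?_)
    rw [uIcc_of_le (by linarith)] at hr
    constructor <;> linarith [hr.1, hr.2]
  have hint : ∫ r in (s - τ)..s, u (r - τ) ≤ τ * (exp (Γ * τ) * exp (Γ * τ) * E) := by
    have := intervalIntegral.integral_mono_on (by linarith) hshift intervalIntegrable_const
      fun r hr ↦ hpast (r - τ) ⟨by linarith [hr.1], by linarith [hr.2]⟩
    rw [intervalIntegral.integral_const, smul_eq_mul, sub_sub_cancel] at this
    exact this
  have hlast : u (s - τ) ≤ exp (Γ * τ) * E := by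
    rw [show exp (Γ * τ) * E = K * exp (-Γ * (s - τ - c)) by
      rw [exp_neg_mul_sub_eq Γ c _ s, sub_sub_cancel]; ring]
    exact hle _ ⟨by linarith, le_rfl⟩
  calc α / τ * (∫ r in (s - τ)..s, u (r - τ)) + γ * u (s - τ)
      ≤ α / τ * (τ * (exp (Γ * τ) * exp (Γ * τ) * E)) + γ * (exp (Γ * τ) * E) := by
        gcongr
    _ = exp (Γ * τ) * (exp (Γ * τ) * α + γ) * E := by field_simp

theorem halanay_lt_of_forall_lt {u : ℝ → ℝ} {τ α γ η Γ K t : ℝ} (hτ : 0 < τ) (hα : 0 ≤ α)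
    (hγ : 0 ≤ γ) (hΓ : 0 ≤ Γ) (hΓeq : exp (Γ * τ) * (exp (Γ * τ) * α + γ) + Γ = η)
    (hu_cont : ContinuousOn u (Ici 0)) (hu_lip : LocallyLipschitzOn (Ioi (2 * τ)) u)
    (hu_ineq : ∀ᵐ t ∂(volume : Measure ℝ), t ∈ Ioi (2 * τ) →
      DifferentiableAt ℝ u t →
      deriv u t ≤ α / τ * (∫ s in (t - τ)..t, u (s - τ)) + γ * u (t - τ) - η * u t)
    (hK0 : 0 ≤ K) (hK : ∀ s ∈ Icc 0 (2 * τ), u s < K) (ht : 2 * τ ≤ t) :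
    u t < K * exp (-Γ * (t - 2 * τ)) := by
  set W : ℝ → ℝ := fun s ↦ K * exp (-Γ * (s - 2 * τ))
  by_contra! hWt
  have hcont : ContinuousOn u (Icc (2 * τ) t) :=
    hu_cont.mono fun s hs ↦ mem_Ici.2 (by linarith [hs.1])
  obtain ⟨T, hT, hWT, hbefore⟩ := exists_first_le_of_lt ht hcont
    (by fun_prop : ContinuousOn W _) (by simpa [W] using hK _ ⟨by linarith, le_rfl⟩) hWt
  have hbelow : ∀ r ∈ Ico 0 T, u r ≤ W r := by
    intro r hr
    rcases le_or_gt r (2 * τ) with h | h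
    · calc u r ≤ K := (hK r ⟨hr.1, h⟩).le
        _ ≤ W r := le_mul_of_one_le_right hK0 (one_le_exp (by nlinarith))
    · exact (hbefore r ⟨h.le, hr.2⟩).le
  have hrhs : ∀ s ∈ Ioc (2 * τ) T,
      α / τ * (∫ r in (s - τ)..s, u (r - τ)) + γ * u (s - τ) ≤ (η - Γ) * W s := by
    intro s hs
    rw [← hΓeq, add_sub_cancel_right]
    exact halanay_delay_terms_le hτ hα hγ hΓ hK0
      (hu_cont.mono fun r hr ↦ mem_Ici.2 (by linarith [hr.1, hs.1]))
      fun r hr ↦ hbelow r ⟨by linarith [hr.1, hs.1], by linarith [hr.2, hs.2]⟩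
  obtain ⟨x₀, hx₀⟩ := exists_between hT.1
  have hac : AbsolutelyContinuousOnInterval (fun s ↦ W s - u s) x₀ T := by
    obtain ⟨L, hL⟩ := (hu_lip.mono fun s hs ↦ mem_Ioi.2 (hx₀.1.trans_le hs.1)
      : LocallyLipschitzOn (Icc x₀ T) u).exists_lipschitzOnWith_of_compact isCompact_Icc
    rw [← uIcc_of_le hx₀.2.le] at hL
    exact (ContDiffOn.absolutelyContinuousOnInterval (by fun_prop)).sub
      hL.absolutelyContinuousOnInterval
  have hderiv : ∀ᵐ x, x ∈ Ioo x₀ T → DifferentiableAt ℝ (fun s ↦ W s - u s) x →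
      -(η * (W x - u x)) ≤ deriv (fun s ↦ W s - u s) x := by
    filter_upwards [hu_ineq] with x hx hxT hdiff
    have hWd : HasDerivAt W (-Γ * W x) x := by
      refine ((((hasDerivAt_id x).sub_const (2 * τ)).const_mul (-Γ)).exp.const_mul K
        |>.congr_deriv ?_)
      simp only [W, id]
      ring_nf
    have hud : DifferentiableAt ℝ u x :=
      (hWd.differentiableAt.sub hdiff).congr_of_eventuallyEq (.of_forall fun s ↦ by simp)
    rw [deriv_fun_sub hWd.differentiableAt hud, hWd.deriv]
    have h1 := hx (hx₀.1.trans hxT.1) hud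
    have h2 := hrhs x ⟨hx₀.1.trans hxT.1, hxT.2.le⟩
    linarith
  have hmono := hac.mul_exp_le_of_ae_neg_mul_le_deriv hx₀.2.le hderiv
  have hx₀pos : 0 < W x₀ - u x₀ := sub_pos.2 (hbefore x₀ ⟨hx₀.1.le, hx₀.2⟩)
  nlinarith [exp_pos (η * T), mul_pos hx₀pos (exp_pos (η * x₀))]

theorem stmt_17_general
    (τ α γ η : ℝ) (hτ : 0 < τ) (hα : 0 < α) (hγ : 0 < γ)
    (u : ℝ → ℝ)
    (hu_nonneg : ∀ t, 0 ≤ t → 0 ≤ u t)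
    (hu_cont : ContinuousOn u (Set.Ici 0))
    (hu_lip : ∀ t ∈ Set.Ioi (2 * τ), ∃ ε > (0:ℝ), ∃ L : NNReal,
      LipschitzOnWith L u (Set.Ioo (t - ε) (t + ε) ∩ Set.Ioi (2 * τ)))
    (hu_ineq : ∀ᵐ t ∂(volume : Measure ℝ), t ∈ Set.Ioi (2 * τ) →
      DifferentiableAt ℝ u t →
      deriv u t ≤ α / τ * (∫ s in (t - τ)..t, u (s - τ)) + γ * u (t - τ) - η * u t)
    (Γ : ℝ) (hΓmem : Γ ∈ Set.Ioo (0:ℝ) η)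
    (hΓeq : Real.exp (Γ * τ) * (Real.exp (Γ * τ) * α + γ) + Γ = η) :
    ∀ t, 2 * τ ≤ t →
      u t ≤ sSup (u '' Set.Icc 0 (2 * τ)) * Real.exp (-Γ * (t - 2 * τ)) := by
  have hloc : LocallyLipschitzOn (Ioi (2 * τ)) u := fun t ht ↦ by
    obtain ⟨ε, hε, L, hL⟩ := hu_lip t ht
    exact ⟨L, _, inter_mem (mem_nhdsWithin_of_mem_nhds (Ioo_mem_nhds (by linarith)
      (by linarith))) self_mem_nhdsWithin, hL⟩
  have hbdd : BddAbove (u '' Icc 0 (2 * τ)) :=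
    (isCompact_Icc.image_of_continuousOn (hu_cont.mono Icc_subset_Ici_self)).bddAbove
  intro t ht
  set E := exp (-Γ * (t - 2 * τ))
  have hE : 0 < E := exp_pos _
  by_contra! hlt
  have hK : ∀ s ∈ Icc 0 (2 * τ), u s < u t / E := fun s hs ↦
    (le_csSup hbdd (mem_image_of_mem u hs)).trans_lt ((lt_div_iff₀ hE).2 hlt)
  have hcontra := halanay_lt_of_forall_lt hτ hα.le hγ.le hΓmem.1.le hΓeq hu_cont hloc hu_ineq
    (div_nonneg (hu_nonneg t (by linarith)) hE.le) hK ht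
  rw [div_mul_cancel₀ _ hE.ne'] at hcontra
  exact hcontra.false

theorem stmt_17
    (τ α γ η : ℝ) (hτ : 0 < τ) (hα : 0 < α) (hγ : 0 < γ) (hη : 0 < η)
    (hαγη : α + γ < η)
    (u : ℝ → ℝ)
    (hu_nonneg : ∀ t, 0 ≤ t → 0 ≤ u t)
    (hu_cont : ContinuousOn u (Set.Ici 0))
    (hu_lip : ∀ t ∈ Set.Ioi (2 * τ), ∃ ε > (0:ℝ), ∃ L : NNReal,
      LipschitzOnWith L u (Set.Ioo (t - ε) (t + ε) ∩ Set.Ioi (2 * τ)))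
    (hu_ineq : ∀ᵐ t ∂(volume : Measure ℝ), t ∈ Set.Ioi (2 * τ) →
      DifferentiableAt ℝ u t →
      deriv u t ≤ α / τ * (∫ s in (t - τ)..t, u (s - τ)) + γ * u (t - τ) - η * u t)
    (Γ : ℝ) (hΓmem : Γ ∈ Set.Ioo (0:ℝ) η)
    (hΓeq : Real.exp (Γ * τ) * (Real.exp (Γ * τ) * α + γ) + Γ = η) :
    ∀ t, 2 * τ ≤ t →
      u t ≤ sSup (u '' Set.Icc 0 (2 * τ)) * Real.exp (-Γ * (t - 2 * τ)) :=
  stmt_17_general τ α γ η hτ hα hγ u hu_nonneg hu_cont hu_lip hu_ineq Γ hΓmem hΓeq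
end

section
/- Let σ, τ > 0 with min{σ, τ} ≤ 1/2. Then the characteristic equation λ + e^{−λτ} + e^{−λσ} = 0 has no purely imaginary nonzero root: for every real ω ≠ 0, one has iω + e^{−iωτ} + e^{−iωσ} ≠ 0. -/
open Complex

lemma key_aux (σ τ ω : ℝ) (hσ : 0 < σ) (hσ2 : σ ≤ 1/2) (hω : 0 < ω)
    (hre : Real.cos (ω*τ) + Real.cos (ω*σ) = 0)
    (him : ω = Real.sin (ω*τ) + Real.sin (ω*σ)) : False := by
  have h1 := Real.sin_sq_add_cos_sq (ω*τ)
  have h2 := Real.sin_sq_add_cos_sq (ω*σ)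
  have hc : Real.cos (ω*τ) ^ 2 = Real.cos (ω*σ) ^ 2 := by
    have : Real.cos (ω*τ) = - Real.cos (ω*σ) := by linarith
    rw [this]; ring
  have hprod : (Real.sin (ω*τ) - Real.sin (ω*σ)) *
      (Real.sin (ω*τ) + Real.sin (ω*σ)) = 0 := by linear_combination h1 - h2 - hc
  rcases mul_eq_zero.mp hprod with h | h
  · have heq : Real.sin (ω*τ) = Real.sin (ω*σ) := by linarith
    have hlt : Real.sin (ω*σ) < ω*σ := Real.sin_lt (mul_pos hω hσ)
    nlinarith
  · nlinarith

theorem stmt_19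
    (σ τ : ℝ) (hσ : 0 < σ) (hτ : 0 < τ) (hmin : min σ τ ≤ 1 / 2) :
    ∀ ω : ℝ, ω ≠ 0 →
      (ω : ℂ) * Complex.I + Complex.exp (-((ω : ℂ) * Complex.I) * (τ : ℂ))
        + Complex.exp (-((ω : ℂ) * Complex.I) * (σ : ℂ)) ≠ 0 := by
  intro ω hω h0
  have hre := congrArg Complex.re h0
  have him := congrArg Complex.im h0
  simp [Complex.exp_re, Complex.exp_im, Complex.add_re, Complex.add_im,
    Real.cos_neg, Real.sin_neg] at hre him
  -- hre : cos(ωτ) + cos(ωσ) = 0 ; him : ω = sin(ωτ) + sin(ωσ)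
  have hre' : Real.cos (ω*τ) + Real.cos (ω*σ) = 0 := by linarith
  have him' : ω = Real.sin (ω*τ) + Real.sin (ω*σ) := by linarith
  rcases lt_or_gt_of_ne hω with hneg | hpos
  · -- use ω' := -ω
    have hre2 : Real.cos ((-ω)*τ) + Real.cos ((-ω)*σ) = 0 := by
      simpa [Real.cos_neg] using hre'
    have him2 : (-ω) = Real.sin ((-ω)*τ) + Real.sin ((-ω)*σ) := by
      simp only [neg_mul, Real.sin_neg]; linarith
    rcases min_le_iff.mp hmin |>.imp id id with _ | _
    all_goals rcases min_le_iff.mp hmin with hs | ht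
    · exact key_aux σ τ (-ω) hσ hs (by linarith) hre2 him2
    · exact key_aux τ σ (-ω) hτ ht (by linarith) (by linarith) (by linarith)
    · exact key_aux σ τ (-ω) hσ hs (by linarith) hre2 him2
    · exact key_aux τ σ (-ω) hτ ht (by linarith) (by linarith) (by linarith)
  · rcases min_le_iff.mp hmin with hs | ht
    · exact key_aux σ τ ω hσ hs hpos hre' him'
    · exact key_aux τ σ ω hτ ht hpos (by linarith) (by linarith)
end
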